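/- arXiv:1304.6848 — 12 statements merged into one kernel-verified Lean document; each statement's English description precedes it below -/
import Mathlib

section
/- Let (G,+) be an abelian group, let F be a proper subgroup of G, and let 𝓕 ⊆ G be a set such that for every subset S ⊆ G with #S ≤ 2·#F there exists φ ∈ G with φ + S ⊆ 𝓕 (i.e., the additivity of 𝓕 exceeds 2·#F). Then there exists g ∈ 𝓕 with g ∉ F such that g + F ⊆ 𝓕; in particular, some coset of F different from F itself is contained in 𝓕. -/
open Cardinal Pointwise

/-! A translate `φ + (F ∪ (x + F))` with `x ∉ F` is the union of the two cosets `φ + F` and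
`(φ + x) + F`, and `φ`, `φ + x` cannot both lie in `F`. The set `F ∪ (x + F)` has at most
`2·#F` elements, so by hypothesis such a translate fits into `𝓕`. -/

theorem Cardinal.mk_union_vadd_set_le {G : Type*} [AddGroup G] (A : Set G) (x : G) :
    #(A ∪ (x +ᵥ A) : Set G) ≤ 2 * #A :=
  calc #(A ∪ (x +ᵥ A) : Set G) ≤ #A + #(x +ᵥ A) := mk_union_le _ _
    _ = 2 * #A := by rw [mk_vadd_set, two_mul]

theorem AddSubgroup.exists_vadd_coset_subset_of_vadd_union_subset {G : Type*} [AddGroup G]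
    {F : AddSubgroup G} {𝓕 : Set G} {x φ : G} (hx : x ∉ F)
    (hφ : φ +ᵥ ((F : Set G) ∪ (x +ᵥ (F : Set G))) ⊆ 𝓕) :
    ∃ g ∈ 𝓕, g ∉ F ∧ g +ᵥ (F : Set G) ⊆ 𝓕 := by
  rw [Set.vadd_set_union, vadd_vadd, Set.union_subset_iff] at hφ
  have mem_of_coset_subset {g : G} (hg : g +ᵥ (F : Set G) ⊆ 𝓕) : g ∈ 𝓕 := by
    simpa using hg (Set.vadd_mem_vadd_set F.zero_mem)
  by_cases hφF : φ ∈ F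
  · have hφxF : φ +ᵥ x ∉ F := fun h => hx ((F.add_mem_cancel_left hφF).mp h)
    exact ⟨φ +ᵥ x, mem_of_coset_subset hφ.2, hφxF, hφ.2⟩
  · exact ⟨φ, mem_of_coset_subset hφ.1, hφF, hφ.1⟩

/-- **Lemma 2.1.** Let `(G,+)` be an abelian group, `F` a proper subgroup of `G`, and
`𝓕 ⊆ G` such that every subset `S ⊆ G` with `#S ≤ 2·#F` admits a translate into `𝓕`.
Then some coset of `F` different from `F` itself is contained in `𝓕`. -/
theorem coset_in_family_of_additivity_gt {G : Type*} [AddCommGroup G]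
    (F : AddSubgroup G) (hF : F ≠ ⊤) (𝓕 : Set G)
    (hadd : ∀ S : Set G, #S ≤ 2 * #F → ∃ φ : G, (fun s => φ + s) '' S ⊆ 𝓕) :
    ∃ g ∈ 𝓕, g ∉ F ∧ (fun x => g + x) '' (F : Set G) ⊆ 𝓕 := by
  obtain ⟨x, hx⟩ := SetLike.exists_not_mem_of_ne_top F hF
  obtain ⟨φ, hφ⟩ := hadd _ (mk_union_vadd_set_le (F : Set G) x)
  simp only [← vadd_eq_add, Set.image_vadd] at hφ ⊢
  exact F.exists_vadd_coset_subset_of_vadd_union_subset hx hφ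
end

section
/- Let K be an infinite field and V a vector space over K, and let κ be a cardinal with #K < κ ≤ Module.rank K V. Suppose 𝓕 ⊆ V is star-like (a • f ∈ 𝓕 for every a ∈ K \ {0} and f ∈ 𝓕) and for every subset F ⊆ V with #F < κ there exists φ ∈ V with φ + F ⊆ 𝓕 (i.e., the additivity of 𝓕 is at least κ). Then 𝓕 is κ-lineable: there exists a K-linear subspace W of V with W ⊆ 𝓕 ∪ {0} and dim W = κ. -/
open Cardinal

universe u

/-- The span of the range of a family indexed by a type of cardinality `< κ` has
cardinality `< κ`, provided `#K < κ`. -/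
lemma mk_span_lt_aux {K V : Type u} [Field K] [Infinite K] [AddCommGroup V] [Module K V]
    {κ : Cardinal.{u}} (hK : #K < κ) {ι : Type u} (hι : #ι < κ) (w : ι → V) :
    #(Submodule.span K (Set.range w)) < κ := by
  have hκ : ℵ₀ ≤ κ := (aleph0_le_mk K).trans hK.le
  have hsurj : Function.Surjective (fun c : ι →₀ K =>
      (⟨Finsupp.linearCombination K w c, by
        have : Finsupp.linearCombination K w c ∈ LinearMap.range (Finsupp.linearCombination K w) :=
          ⟨c, rfl⟩
        rwa [Finsupp.range_linearCombination] at this⟩ :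
        Submodule.span K (Set.range w))) := by
    rintro ⟨x, hx⟩
    rw [← Finsupp.range_linearCombination] at hx
    obtain ⟨c, hc⟩ := hx
    exact ⟨c, Subtype.ext hc⟩
  refine lt_of_le_of_lt (Cardinal.mk_le_of_surjective hsurj) ?_
  cases isEmpty_or_nonempty ι with
  | inl h =>
    haveI : Fintype ι := Fintype.ofIsEmpty
    rw [Cardinal.mk_finsupp_of_fintype]
    simp only [Fintype.card_eq_zero, pow_zero]
    exact lt_of_lt_of_le Cardinal.one_lt_aleph0 hκ
  | inr h =>
    rw [Cardinal.mk_finsupp_of_infinite']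
    exact max_lt hι hK

/-- Key step: given a submodule `S` of cardinality `< κ`, there is a vector `v ∉ S` whose
translate of `S` lies in `𝓕`. -/
lemma exists_translate_aux {K V : Type u} [Field K] [Infinite K] [AddCommGroup V] [Module K V]
    {κ : Cardinal.{u}} (hK : #K < κ) (hV : κ ≤ Module.rank K V) (𝓕 : Set V)
    (hadd : ∀ F : Set V, #F < κ → ∃ φ : V, (fun f => φ + f) '' F ⊆ 𝓕)
    (S : Submodule K V) (hS : #S < κ) :
    ∃ v : V, v ∉ S ∧ ∀ s ∈ S, v + s ∈ 𝓕 := by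
  have hκ : ℵ₀ ≤ κ := (aleph0_le_mk K).trans hK.le
  obtain ⟨x, hx⟩ : ∃ x, x ∉ S := by
    by_contra h
    push_neg at h
    have hStop : S = ⊤ := eq_top_iff.2 fun y _ => h y
    have h1 : κ ≤ #S := by
      calc κ ≤ Module.rank K V := hV
        _ = Module.rank K (⊤ : Submodule K V) := (rank_top K V).symm
        _ = Module.rank K S := by rw [hStop]
        _ ≤ #S := rank_le_card _ _
    exact absurd hS (not_lt.2 h1)
  set F : Set V := ↑S ∪ (fun s => x + s) '' ↑S with hF
  have hFcard : #F < κ := by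
    refine lt_of_le_of_lt (Cardinal.mk_union_le _ _) ?_
    exact Cardinal.add_lt_of_lt hκ hS (lt_of_le_of_lt (Cardinal.mk_image_le) hS)
  obtain ⟨φ, hφ⟩ := hadd F hFcard
  by_cases hφS : φ ∈ S
  · refine ⟨φ + x, ?_, ?_⟩
    · intro h
      exact hx (by simpa using S.sub_mem h hφS)
    · intro s hs
      have hmem : x + s ∈ F := Or.inr ⟨s, hs, rfl⟩
      have := hφ ⟨x + s, hmem, rfl⟩
      rw [add_assoc]
      exact this
  · refine ⟨φ, hφS, fun s hs => ?_⟩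
    exact hφ ⟨s, Or.inl hs, rfl⟩

/-- **Theorem.** Let `K` be an infinite field and `V` a `K`-vector space, and let `κ` be a
cardinal with `#K < κ ≤ dim V`. If `𝓕 ⊆ V` is star-like and its additivity is at least `κ`
(every set of cardinality `< κ` admits a translate into `𝓕`), then `𝓕` is `κ`-lineable. -/
theorem lineable_of_additivity {K V : Type u} [Field K] [Infinite K]
    [AddCommGroup V] [Module K V] (κ : Cardinal.{u})
    (hK : #K < κ) (hV : κ ≤ Module.rank K V) (𝓕 : Set V)
    (hstar : ∀ a : K, a ≠ 0 → ∀ f ∈ 𝓕, a • f ∈ 𝓕)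
    (hadd : ∀ F : Set V, #F < κ → ∃ φ : V, (fun f => φ + f) '' F ⊆ 𝓕) :
    ∃ W : Submodule K V, (W : Set V) ⊆ 𝓕 ∪ {0} ∧ Module.rank K W = κ := by
  classical
  set ι := κ.ord.ToType with hιdef
  have hmkι : #ι = κ := by rw [Cardinal.mk_toType, Cardinal.card_ord]
  have hlt : ∀ i : ι, #{j : ι // j < i} < κ := fun i =>
    Cardinal.mk_Iio_ord_toType i
  let v : ι → V := (wellFounded_lt : WellFounded ((· < ·) : ι → ι → Prop)).fix
    (fun i ih => Classical.choose (exists_translate_aux hK hV 𝓕 hadd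
      (Submodule.span K (Set.range fun j : {j : ι // j < i} => ih j.1 j.2))
      (mk_span_lt_aux hK (hlt i) _)))
  have hveq : ∀ i : ι, v i = Classical.choose (exists_translate_aux hK hV 𝓕 hadd
      (Submodule.span K (Set.range fun j : {j : ι // j < i} => v j.1))
      (mk_span_lt_aux hK (hlt i) _)) := fun i => WellFounded.fix_eq _ _ i
  have hP : ∀ i : ι, v i ∉ Submodule.span K (Set.range fun j : {j : ι // j < i} => v j.1) ∧
      ∀ s ∈ Submodule.span K (Set.range fun j : {j : ι // j < i} => v j.1), v i + s ∈ 𝓕 := by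
    intro i
    have h := Classical.choose_spec (exists_translate_aux hK hV 𝓕 hadd
      (Submodule.span K (Set.range fun j : {j : ι // j < i} => v j.1))
      (mk_span_lt_aux hK (hlt i) _))
    rw [← hveq i] at h
    exact h
  have decomp : ∀ c : ι →₀ K, c ≠ 0 → ∃ (i : ι) (y : V),
      y ∈ Submodule.span K (Set.range fun j : {j : ι // j < i} => v j.1) ∧ c i ≠ 0 ∧
      (c.sum fun j a => a • v j) = c i • v i + y := by
    intro c hc
    have hne : c.support.Nonempty := Finsupp.support_nonempty_iff.2 hc
    set i := c.support.max' hne with hi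
    refine ⟨i, ∑ j ∈ c.support.erase i, c j • v j, ?_,
      Finsupp.mem_support_iff.1 (c.support.max'_mem hne), ?_⟩
    · apply Submodule.sum_mem
      intro j hj
      apply Submodule.smul_mem
      apply Submodule.subset_span
      have hji : j ∈ c.support := Finset.mem_of_mem_erase hj
      exact ⟨⟨j, lt_of_le_of_ne (c.support.le_max' j hji) (Finset.ne_of_mem_erase hj)⟩, rfl⟩
    · rw [Finsupp.sum]
      exact (Finset.add_sum_erase _ _ (c.support.max'_mem hne)).symm
  have hli : LinearIndependent K v := by
    rw [linearIndependent_iff]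
    intro c hc0
    by_contra hc
    obtain ⟨i, y, hy, hci, heq⟩ := decomp c hc
    rw [Finsupp.linearCombination_apply, heq] at hc0
    have hvy : c i • v i = -y := by rwa [add_eq_zero_iff_eq_neg] at hc0
    have : v i ∈ Submodule.span K (Set.range fun j : {j : ι // j < i} => v j.1) := by
      have hvi : v i = (c i)⁻¹ • (-y) := by
        rw [← hvy, smul_smul, inv_mul_cancel₀ hci, one_smul]
      rw [hvi]
      exact Submodule.smul_mem _ _ (Submodule.neg_mem _ hy)
    exact (hP i).1 this
  refine ⟨Submodule.span K (Set.range v), ?_, ?_⟩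
  · intro x hx
    by_cases hx0 : x = 0
    · exact Or.inr (by simp [hx0])
    left
    obtain ⟨c, hc⟩ := Finsupp.mem_span_range_iff_exists_finsupp.1 hx
    have hc0 : c ≠ 0 := by
      rintro rfl
      rw [Finsupp.sum_zero_index] at hc
      exact hx0 hc.symm
    obtain ⟨i, y, hy, hci, heq⟩ := decomp c hc0
    rw [heq] at hc
    have h1 : v i + (c i)⁻¹ • y ∈ 𝓕 := (hP i).2 _ (Submodule.smul_mem _ _ hy)
    have h2 := hstar (c i) hci _ h1
    rw [smul_add, smul_inv_smul₀ hci] at h2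
    rwa [hc] at h2
  · rw [rank_span hli, Cardinal.mk_range_eq _ hli.injective, hmkι]
end

section
/- Let K be an infinite field and V a vector space over K, and let κ be a cardinal with #K < κ ≤ Module.rank K V. Suppose 𝓕 ⊆ V is star-like (a • f ∈ 𝓕 for every a ∈ K \ {0} and f ∈ 𝓕) and for every subset F ⊆ V with #F < κ there exists φ ∈ V with φ + F ⊆ 𝓕. Then every K-linear subspace Y of V with Y ⊆ 𝓕 ∪ {0} and dim Y < κ is contained in a K-linear subspace X of V with X ⊆ 𝓕 ∪ {0} and dim X = κ. -/
/-!
By Zorn's lemma `Y` lies in a maximal subspace `M ⊆ 𝓕 ∪ {0}`. If `dim M < κ`, then also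
`#M < κ` because `#K < κ`, so some translate `φ + (M ∪ (v + M))` with `v ∉ M` lies in `𝓕`; this
yields `w ∉ M` with `w + M ⊆ 𝓕`, and star-likeness puts all of `M ⊔ K ∙ w` into `𝓕 ∪ {0}`,
contradicting maximality. Hence `dim M ≥ κ`, and extending a basis of `Y` inside `M` by the
right number of vectors gives the required `X`.
-/

open Cardinal

def IsStarLike (K : Type*) {V : Type*} [Zero K] [SMul K V] (𝓕 : Set V) : Prop :=
  ∀ a : K, a ≠ 0 → ∀ f ∈ 𝓕, a • f ∈ 𝓕

def AdditivityAtLeast {V : Type u} [Add V] (𝓕 : Set V) (κ : Cardinal.{u}) : Prop :=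
  ∀ F : Set V, #F < κ → ∃ φ : V, (fun f => φ + f) '' F ⊆ 𝓕

theorem Cardinal.exists_superset_subset_mk_eq {α : Type u} {κ : Cardinal.{u}}
    (hκ : ℵ₀ ≤ κ) {s t : Set α} (hst : s ⊆ t) (hs : #s ≤ κ) (ht : κ ≤ #t) :
    ∃ u, s ⊆ u ∧ u ⊆ t ∧ #u = κ := by
  obtain ⟨u, hut, hu⟩ := le_mk_iff_exists_subset.mp ht
  refine ⟨s ∪ u, Set.subset_union_left, Set.union_subset hst hut, le_antisymm ?_ ?_⟩
  · calc #(s ∪ u : Set α) ≤ #s + #u := mk_union_le s u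
      _ = κ := by rw [hu, add_eq_right hκ hs]
  · exact hu ▸ mk_le_mk_of_subset Set.subset_union_right

theorem Module.Free.mk_lt_of_rank_lt {R M : Type u} [Semiring R] [StrongRankCondition R]
    [Infinite R] [AddCommMonoid M] [Module R M] [Module.Free R M] {κ : Cardinal.{u}}
    (hR : #R < κ) (hM : Module.rank R M < κ) : #M < κ := by
  by_contra! h
  have hrank :=
    Module.Free.rank_eq_mk_of_infinite_lt (R := R) (M := M) (by simpa using hR.trans_le h)
  exact (hrank ▸ hM).not_ge h

namespace Submodule

variable {K V : Type*} [DivisionRing K] [AddCommGroup V] [Module K V]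

theorem exists_le_le_rank_eq {κ : Cardinal} (hκ : ℵ₀ ≤ κ) {Y U : Submodule K V} (hYU : Y ≤ U)
    (hY : Module.rank K Y ≤ κ) (hU : κ ≤ Module.rank K U) :
    ∃ X : Submodule K V, Y ≤ X ∧ X ≤ U ∧ Module.rank K X = κ := by
  obtain ⟨s, hsY, hspan, hs⟩ := exists_linearIndependent K (Y : Set V)
  rw [span_eq] at hspan
  obtain ⟨b, hbU, hsb, hUb, hb⟩ :=
    exists_linearIndepOn_id_extension hs (hsY.trans (SetLike.coe_subset_coe.mpr hYU))
  have hκb : κ ≤ #b := by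
    rw [← rank_span_set hb]
    exact hU.trans (rank_mono (SetLike.coe_subset_coe.mp hUb))
  obtain ⟨u, hsu, hub, hu⟩ :=
    exists_superset_subset_mk_eq hκ hsb (by rwa [← rank_span_set hs, hspan]) hκb
  refine ⟨span K u, hspan ▸ span_mono hsu, span_le.mpr (hub.trans hbU), ?_⟩
  rw [rank_span_set (hb.mono hub), hu]

theorem exists_le_maximal_coe_subset {S : Set V} {Y : Submodule K V} (hY : (Y : Set V) ⊆ S) :
    ∃ M, Y ≤ M ∧ Maximal (fun Z : Submodule K V => (Z : Set V) ⊆ S) M := by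
  refine zorn_le_nonempty₀ _ (fun c hcS hc Z hZ => ⟨sSup c, ?_, fun _ => le_sSup⟩) Y hY
  intro x hx
  obtain ⟨Z', hZ'c, hxZ'⟩ := (mem_sSup_of_directed ⟨Z, hZ⟩ hc.directedOn).mp hx
  exact hcS hZ'c hxZ'

theorem coe_sup_span_singleton_subset {𝓕 : Set V} (hstar : IsStarLike K 𝓕)
    {Z : Submodule K V} (hZ : (Z : Set V) ⊆ 𝓕 ∪ {0}) {w : V} (hw : ∀ z ∈ Z, w + z ∈ 𝓕) :
    ((Z ⊔ K ∙ w : Submodule K V) : Set V) ⊆ 𝓕 ∪ {0} := by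
  intro x hx
  obtain ⟨z, hz, y, hy, rfl⟩ := mem_sup.mp hx
  obtain ⟨a, rfl⟩ := mem_span_singleton.mp hy
  rcases eq_or_ne a 0 with rfl | ha
  · simpa using hZ hz
  · left
    have hline : a • (w + a⁻¹ • z) = z + a • w := by
      rw [smul_add, smul_smul, mul_inv_cancel₀ ha, one_smul, add_comm]
    exact hline ▸ hstar a ha _ (hw _ (Z.smul_mem _ hz))

end Submodule

/-- If `φ` translates `Z ∪ (v + Z)` into `𝓕`, then whichever of `φ`, `φ + v` lies outside `Z`
is a valid `w`. -/
theorem AddSubgroup.exists_notMem_add_mem_of_additivity {V : Type u} [AddCommGroup V]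
    {𝓕 : Set V} {κ : Cardinal.{u}} (hκ : ℵ₀ ≤ κ) (hadd : AdditivityAtLeast 𝓕 κ)
    {Z : AddSubgroup V} (hZ : #Z < κ) {v : V} (hv : v ∉ Z) :
    ∃ w ∉ Z, ∀ z ∈ Z, w + z ∈ 𝓕 := by
  have hvZ : #((fun z => v + z) '' (Z : Set V)) < κ := mk_image_le.trans_lt hZ
  obtain ⟨φ, hφ⟩ := hadd _ ((mk_union_le _ _).trans_lt (add_lt_of_lt hκ hZ hvZ))
  by_cases hφZ : φ ∈ Z
  · refine ⟨φ + v, fun h => hv (by simpa using Z.sub_mem h hφZ), fun z hz => ?_⟩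
    simpa [add_assoc] using hφ ⟨v + z, Or.inr ⟨z, hz, rfl⟩, rfl⟩
  · exact ⟨φ, hφZ, fun z hz => hφ ⟨z, Or.inl hz, rfl⟩⟩

/-- **Theorem (extension version).** Let `K` be an infinite field, `V` a `K`-vector space,
and `κ` a cardinal with `#K < κ ≤ dim V`. If `𝓕 ⊆ V` is star-like and its additivity is at
least `κ`, then every subspace `Y ⊆ 𝓕 ∪ {0}` of dimension `< κ` extends to a subspace
`X ⊆ 𝓕 ∪ {0}` of dimension exactly `κ`. -/
theorem extend_subspace_of_additivity {K V : Type u} [Field K] [Infinite K]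
    [AddCommGroup V] [Module K V] (κ : Cardinal.{u})
    (hK : #K < κ) (hV : κ ≤ Module.rank K V) (𝓕 : Set V)
    (hstar : ∀ a : K, a ≠ 0 → ∀ f ∈ 𝓕, a • f ∈ 𝓕)
    (hadd : ∀ F : Set V, #F < κ → ∃ φ : V, (fun f => φ + f) '' F ⊆ 𝓕) :
    ∀ Y : Submodule K V, (Y : Set V) ⊆ 𝓕 ∪ {0} → Module.rank K Y < κ →
      ∃ X : Submodule K V, Y ≤ X ∧ (X : Set V) ⊆ 𝓕 ∪ {0} ∧ Module.rank K X = κ := by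
  intro Y hYF hYκ
  have hκ : ℵ₀ ≤ κ := (aleph0_le_mk K).trans hK.le
  obtain ⟨M, hYM, hM⟩ := Submodule.exists_le_maximal_coe_subset hYF
  have hMκ : κ ≤ Module.rank K M := by
    by_contra! hlt
    have hMtop : M ≠ ⊤ := fun h => (hlt.trans_le hV).ne (by rw [h, rank_top])
    obtain ⟨v, -, hv⟩ := SetLike.exists_of_lt hMtop.lt_top
    obtain ⟨w, hwM, hw⟩ := AddSubgroup.exists_notMem_add_mem_of_additivity (Z := M.toAddSubgroup)
      hκ hadd (Module.Free.mk_lt_of_rank_lt (M := M) hK hlt) hv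
    have hext :=
      hM.le_of_ge (Submodule.coe_sup_span_singleton_subset hstar hM.prop hw) le_sup_left
    exact hwM (hext (Submodule.mem_sup_right (Submodule.mem_span_singleton_self w)))
  obtain ⟨X, hYX, hXM, hX⟩ := Submodule.exists_le_le_rank_eq hκ hYM hYκ.le hMκ
  exact ⟨X, hYX, (SetLike.coe_subset_coe.mpr hXM).trans hM.prop, hX⟩
end

section
/- Let V be a vector space over a field K and let 𝓕 ⊆ V. Then HL(𝓕) is a successor cardinal: there exists a cardinal μ with HL(𝓕) = Order.succ μ. -/
open Cardinal

/-- The lineability number of `𝓕 ⊆ V`: the least cardinal `l` such that `𝓕 ∪ {0}` contains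
no `K`-linear subspace of dimension `l`. -/
noncomputable def lineabilityNumber (K V : Type u) [Field K] [AddCommGroup V] [Module K V]
    (𝓕 : Set V) : Cardinal.{u} :=
  sInf {l : Cardinal.{u} |
    ¬ ∃ W : Submodule K V, (W : Set V) ⊆ 𝓕 ∪ {0} ∧ Module.rank K W = l}

/-- The homogeneous lineability number of `𝓕 ⊆ V`: the least cardinal `l` for which some
subspace `Y ⊆ 𝓕 ∪ {0}` of dimension `< l` cannot be extended to a subspace `X ⊆ 𝓕 ∪ {0}`
of dimension `l`. -/
noncomputable def homLineabilityNumber (K V : Type u) [Field K] [AddCommGroup V] [Module K V]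
    (𝓕 : Set V) : Cardinal.{u} :=
  sInf {l : Cardinal.{u} |
    ∃ Y : Submodule K V, (Y : Set V) ⊆ 𝓕 ∪ {0} ∧ Module.rank K Y < l ∧
      ¬ ∃ X : Submodule K V, Y ≤ X ∧ (X : Set V) ⊆ 𝓕 ∪ {0} ∧ Module.rank K X = l}

/-!
If `l = HL(𝓕)` were a limit cardinal, fix a subspace `Y ⊆ 𝓕 ∪ {0}` of dimension `< l` with no
extension of dimension exactly `l`. Among the subspaces `Y ≤ X ⊆ 𝓕 ∪ {0}` of dimension `< l`,
Zorn's lemma gives a maximal one `M`: the union of a chain cannot reach dimension `l`, since it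
would then contain an extension of `Y` of dimension exactly `l` (here `l` is infinite). But
`(dim M)⁺ < l`, so by minimality of `l` the subspace `M` extends to one of dimension `(dim M)⁺`,
contradicting maximality.
-/

namespace Submodule

variable {K V : Type u} [Field K] [AddCommGroup V] [Module K V]

theorem exists_le_le_rank_eq_s6 {Y M : Submodule K V} (hYM : Y ≤ M) {l : Cardinal.{u}}
    (hl : ℵ₀ ≤ l) (hY : Module.rank K Y ≤ l) (hM : l ≤ Module.rank K M) :
    ∃ Z : Submodule K V, Y ≤ Z ∧ Z ≤ M ∧ Module.rank K Z = l := by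
  obtain ⟨s, hs, hind⟩ := le_rank_iff_exists_linearIndependent.mp hM
  set W : Submodule K V := (span K s).map M.subtype
  have hW : Module.rank K W = l := by
    rw [rank_map_eq M.injective_subtype, rank_span_set hind, hs]
  refine ⟨Y ⊔ W, le_sup_left, sup_le hYM (map_subtype_le _ _), le_antisymm ?_ ?_⟩
  · calc Module.rank K ↥(Y ⊔ W) ≤ Module.rank K Y + Module.rank K W :=
          rank_add_le_rank_add_rank _ _
      _ = l := by rw [hW, add_eq_right hl hY]
  · exact hW ▸ rank_mono le_sup_right

theorem coe_sSup_subset_of_isChain {c : Set (Submodule K V)} (hc : IsChain (· ≤ ·) c)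
    (hne : c.Nonempty) {A : Set V} (hA : ∀ X ∈ c, (X : Set V) ⊆ A) :
    ((sSup c : Submodule K V) : Set V) ⊆ A := fun _ hx ↦ by
  obtain ⟨X, hXc, hxX⟩ := (mem_sSup_of_directed hne hc.directedOn).mp hx
  exact hA X hXc hxX

theorem exists_maximal_rank_lt {A : Set V} {Y : Submodule K V} {l : Cardinal.{u}}
    (hl : ℵ₀ ≤ l) (hYA : (Y : Set V) ⊆ A) (hYl : Module.rank K Y < l)
    (hY : ¬ ∃ X : Submodule K V, Y ≤ X ∧ (X : Set V) ⊆ A ∧ Module.rank K X = l) :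
    ∃ M : Submodule K V,
      Maximal (fun X : Submodule K V ↦ Y ≤ X ∧ (X : Set V) ⊆ A ∧ Module.rank K X < l) M := by
  refine (zorn_le_nonempty₀ {X | Y ≤ X ∧ (X : Set V) ⊆ A ∧ Module.rank K X < l}
    (fun c hcP hc X hXc ↦ ?_) Y ⟨le_rfl, hYA, hYl⟩).imp fun _ ↦ And.right
  have hYc : Y ≤ sSup c := (hcP hXc).1.trans (le_sSup hXc)
  have hcA : ((sSup c : Submodule K V) : Set V) ⊆ A :=
    coe_sSup_subset_of_isChain hc ⟨X, hXc⟩ fun Z hZ ↦ (hcP hZ).2.1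
  refine ⟨sSup c, ⟨hYc, hcA, not_le.mp fun hcl ↦ hY ?_⟩, fun _ ↦ le_sSup⟩
  obtain ⟨Z, hYZ, hZc, hZ⟩ := exists_le_le_rank_eq_s6 hYc hl hYl.le hcl
  exact ⟨Z, hYZ, (SetLike.coe_subset_coe.mpr hZc).trans hcA, hZ⟩

end Submodule

section homLineabilityNumber

variable {K V : Type u} [Field K] [AddCommGroup V] [Module K V]

theorem exists_not_extendable_homLineabilityNumber (𝓕 : Set V) :
    ∃ Y : Submodule K V, (Y : Set V) ⊆ 𝓕 ∪ {0} ∧ Module.rank K Y < homLineabilityNumber K V 𝓕 ∧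
      ¬ ∃ X : Submodule K V, Y ≤ X ∧ (X : Set V) ⊆ 𝓕 ∪ {0} ∧
        Module.rank K X = homLineabilityNumber K V 𝓕 := by
  refine (csInf_mem ⟨Order.succ (Module.rank K V), ⊥, by simp, by simp, ?_⟩ :
    homLineabilityNumber K V 𝓕 ∈ _)
  rintro ⟨X, -, -, hX⟩
  exact (Submodule.rank_le X).trans_lt (Order.lt_succ _) |>.ne hX

theorem exists_extension_of_lt_homLineabilityNumber {𝓕 : Set V} {l : Cardinal.{u}}
    (hl : l < homLineabilityNumber K V 𝓕) {Y : Submodule K V} (hY : (Y : Set V) ⊆ 𝓕 ∪ {0})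
    (hYl : Module.rank K Y < l) :
    ∃ X : Submodule K V, Y ≤ X ∧ (X : Set V) ⊆ 𝓕 ∪ {0} ∧ Module.rank K X = l := by
  by_contra hX
  exact notMem_of_lt_csInf' hl ⟨Y, hY, hYl, hX⟩

end homLineabilityNumber

/-- **Proposition (iv).** The homogeneous lineability number is always a successor
cardinal. -/
theorem homLineabilityNumber_isSucc {K V : Type u} [Field K]
    [AddCommGroup V] [Module K V] (𝓕 : Set V) :
    ∃ μ : Cardinal.{u}, homLineabilityNumber K V 𝓕 = Order.succ μ := by
  set l := homLineabilityNumber K V 𝓕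
  obtain ⟨Y, hY, hYl, hYext⟩ := exists_not_extendable_homLineabilityNumber (K := K) 𝓕
  by_contra hsucc
  have hlim : Order.IsSuccLimit l :=
    ⟨not_isMin_of_lt hYl, Order.isSuccPrelimit_iff_succ_ne.mpr fun μ h ↦ hsucc ⟨μ, h.symm⟩⟩
  obtain ⟨M, hM⟩ := Submodule.exists_maximal_rank_lt (aleph0_le_of_isSuccLimit hlim) hY hYl hYext
  obtain ⟨hYM, hM𝓕, hMl⟩ := hM.prop
  obtain ⟨X, hMX, hX𝓕, hX⟩ := exists_extension_of_lt_homLineabilityNumber (hlim.succ_lt hMl)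
    hM𝓕 (Order.lt_succ (Module.rank K M))
  have hXM : X ≤ M := hM.le_of_ge ⟨hYM.trans hMX, hX𝓕, hX ▸ hlim.succ_lt hMl⟩ hMX
  exact (Order.lt_succ _).not_ge (hX ▸ Submodule.rank_mono hXM)
end

section
/- Let V be a vector space over a field K and let (B_i)_{i ∈ I} be an independent family of K-linear subspaces of V (i.e., for each i, B_i ∩ (span of the union of the B_j for j ≠ i) = {0}; equivalently the union of bases of the B_i forms a linearly independent set). If W is a K-linear subspace of V whose underlying set is contained in the union ⋃_{i ∈ I} B_i, then W ⊆ B_i for some i ∈ I. -/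
/-- If `(B i)` is an independent family of subspaces of `V` and `W` is a subspace whose
underlying set is contained in the union of the underlying sets of the `B i`, then
`W ⊆ B i` for some `i`. -/
theorem submodule_subset_of_subset_iUnion_of_independent {K V : Type u} [Field K]
    [AddCommGroup V] [Module K V] {I : Type v} (B : I → Submodule K V)
    (hB : iSupIndep B) (W : Submodule K V)
    (hW : (W : Set V) ⊆ ⋃ i, (B i : Set V)) :
    ∃ i, W ≤ B i := by
  by_cases hW0 : W = ⊥
  · obtain ⟨i, -⟩ := Set.mem_iUnion.mp (hW (W.zero_mem))
    exact ⟨i, hW0 ▸ bot_le⟩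
  · obtain ⟨w, hwW, hw0⟩ := Submodule.exists_mem_ne_zero_of_ne_bot hW0
    obtain ⟨i, hwi⟩ := Set.mem_iUnion.mp (hW hwW)
    refine ⟨i, fun x hx => ?_⟩
    by_contra hxi
    obtain ⟨j, hxj⟩ := Set.mem_iUnion.mp (hW hx)
    have hji : j ≠ i := fun h => hxi (h ▸ hxj)
    obtain ⟨k, hk⟩ := Set.mem_iUnion.mp (hW (W.add_mem hwW hx))
    by_cases hki : k = i
    · subst hki
      exact hxi ((by abel : w + x - w = x) ▸ (B k).sub_mem hk hwi)
    · have hmem : w ∈ ⨆ j ≠ i, B j := by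
        have h1 : w + x ∈ ⨆ j ≠ i, B j :=
          (le_iSup₂ (f := fun j (_ : j ≠ i) => B j) k hki) hk
        have h2 : x ∈ ⨆ j ≠ i, B j :=
          (le_iSup₂ (f := fun j (_ : j ≠ i) => B j) j hji) hxj
        exact (by abel : w + x - x = w) ▸ Submodule.sub_mem _ h1 h2
      exact hw0 (Submodule.disjoint_def.mp (hB i) w hwi hmem)
end

section
/- Let K be an infinite field of cardinality μ, let κ be a cardinal with 3 ≤ κ ≤ μ, and let V be a vector space over K with Module.rank K V = 2^μ. Then there exists a star-like family 𝓕 ⊆ V such that: (a) for every G ⊆ V with #G < κ there exists φ ∈ V with φ + G ⊆ 𝓕; (b) there exists a set I ⊆ V with #I = κ such that for every φ ∈ V, φ + I ⊄ 𝓕 (so the additivity of 𝓕 equals κ); and (c) 𝓕 is not 2-lineable: there is no K-linear subspace W of V with W ⊆ 𝓕 ∪ {0} and dim W = 2. -/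
/-!
Let `ι = κ.ord.ToType` and let `𝓕₀ ⊆ K × (LinkedIndex ι → K)` consist of the `(a, f)` with
`a ≠ 0` and `f = a` on some `linkedSet (r, c)` with `c < r`. A set `G` with `#G < κ` is translated
into `𝓕₀` by choosing a row `r` with at least `#G` columns below it, sending the members of `G` to
distinct such columns, and correcting each on its own set, these being pairwise disjoint within a
row. The `κ` vectors `(c, 0)` would need translates constant with pairwise distinct values on their
sets, which forces pairwise disjoint sets, hence one row and distinct columns below it; no row has
`κ` of those. A plane always meets the kernel of the first coordinate, which misses `𝓕₀`. Finally
`V` has dimension `2 ^ #K ≥ #(K × (LinkedIndex ι → K))`, so it maps linearly onto this space and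
the preimage of `𝓕₀` does the job.
-/

open Cardinal Set Function

universe u

section Translates

variable {V E F : Type u} [Add V] [Add E] [FunLike F V E] [AddHomClass F V E] {π : F}

theorem forall_exists_translate_subset_preimage (hπ : Surjective π) {𝓕 : Set E}
    {κ : Cardinal.{u}} (h : ∀ G : Set E, #G < κ → ∃ ψ : E, (fun g => ψ + g) '' G ⊆ 𝓕) :
    ∀ G : Set V, #G < κ → ∃ φ : V, (fun g => φ + g) '' G ⊆ π ⁻¹' 𝓕 := by
  intro G hG
  obtain ⟨ψ, hψ⟩ := h (π '' G) (mk_image_le.trans_lt hG)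
  obtain ⟨φ, rfl⟩ := hπ ψ
  refine ⟨φ, ?_⟩
  rintro _ ⟨g, hg, rfl⟩
  simpa only [mem_preimage, map_add] using hψ ⟨π g, mem_image_of_mem π hg, rfl⟩

theorem exists_not_translate_subset_preimage (hπ : Surjective π) {𝓕 : Set E} {I : Set E}
    (h : ∀ ψ : E, ¬ (fun i => ψ + i) '' I ⊆ 𝓕) :
    ∃ J : Set V, #J = #I ∧ ∀ φ : V, ¬ (fun j => φ + j) '' J ⊆ π ⁻¹' 𝓕 := by
  refine ⟨surjInv hπ '' I, mk_image_eq (injective_surjInv hπ), fun φ hφ => h (π φ) ?_⟩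
  rintro _ ⟨i, hi, rfl⟩
  simpa only [mem_preimage, map_add, surjInv_eq hπ] using
    hφ ⟨surjInv hπ i, mem_image_of_mem _ hi, rfl⟩

end Translates

theorem Submodule.rank_le_of_subset_union_zero {K V M : Type u} [DivisionRing K]
    [AddCommGroup V] [Module K V] [AddCommGroup M] [Module K M] (ℓ : V →ₗ[K] M) {𝓕 : Set V}
    (h𝓕 : ∀ v ∈ 𝓕, ℓ v ≠ 0) {W : Submodule K V} (hW : (W : Set V) ⊆ 𝓕 ∪ {0}) :
    Module.rank K W ≤ Module.rank K M := by
  refine LinearMap.rank_le_of_injective (ℓ ∘ₗ W.subtype) ((injective_iff_map_eq_zero _).2 ?_)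
  intro w hw
  rcases hW w.2 with hw𝓕 | hw0
  · exact absurd hw (h𝓕 w hw𝓕)
  · exact Subtype.ext hw0

theorem LinearMap.exists_surjective_of_rank_le {K V E : Type u} [DivisionRing K]
    [AddCommGroup V] [Module K V] [AddCommGroup E] [Module K E]
    (h : Module.rank K E ≤ Module.rank K V) : ∃ π : V →ₗ[K] E, Surjective π := by
  obtain ⟨ι, hι⟩ := rank_le_iff_exists_linearMap.1 h
  obtain ⟨π, hπ⟩ := ι.exists_leftInverse_of_injective (LinearMap.ker_eq_bot.2 hι)
  exact ⟨π, fun e => ⟨ι e, LinearMap.congr_fun hπ e⟩⟩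

theorem exists_forall_mem_eq_of_pairwise_disjoint {ι X Y : Type*} [Nonempty Y] {B : ι → Set X}
    (hB : Pairwise (Disjoint on B)) (f : ι → X → Y) :
    ∃ g : X → Y, ∀ i, ∀ x ∈ B i, g x = f i x := by
  classical
  refine ⟨fun x => if h : ∃ i, x ∈ B i then f h.choose x else Classical.arbitrary Y,
    fun i x hx => ?_⟩
  have h : ∃ i, x ∈ B i := ⟨i, hx⟩
  dsimp only
  rw [dif_pos h, hB.eq (not_disjoint_iff.2 ⟨x, h.choose_spec, hx⟩)]

theorem Cardinal.exists_embedding_Iio_ord_toType {κ : Cardinal.{u}} {α : Type u} (h : #α < κ) :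
    ∃ r : κ.ord.ToType, Nonempty (α ↪ Iio r) := by
  obtain ⟨r, hr⟩ := Ordinal.typein_surj (α := κ.ord.ToType) (· < ·)
    (show (#α).ord < _ by rwa [Ordinal.type_toType, ord_lt_ord])
  refine ⟨r, Cardinal.le_def _ _ |>.1 ?_⟩
  have := congrArg Ordinal.card hr
  rw [card_ord, Ordinal.card_typein] at this
  exact this.ge

namespace LinkedFamily

variable {ι : Type*}

/-- The points are the tags `t = (row, column)` and the pairs of tags in different rows;
`linkedSet t` consists of `t` and the pairs containing it, so two such sets meet exactly when
their tags are equal or lie in different rows. -/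
def LinkedIndex (ι : Type*) := (ι × ι) ⊕ {q : (ι × ι) × (ι × ι) // q.1.1 ≠ q.2.1}

def linkedSet (t : ι × ι) : Set (LinkedIndex ι) :=
  {x | Sum.elim (· = t) (fun q => q.1.1 = t ∨ q.1.2 = t) x}

theorem inl_mem_linkedSet (t : ι × ι) : (Sum.inl t : LinkedIndex ι) ∈ linkedSet t := rfl

theorem eq_of_mem_linkedSet_of_fst_eq {t t' : ι × ι} {x : LinkedIndex ι} (hx : x ∈ linkedSet t)
    (hx' : x ∈ linkedSet t') (h : t.1 = t'.1) : t = t' := by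
  rcases x with s | ⟨⟨s, s'⟩, hss'⟩
  · exact hx.symm.trans hx'
  · rcases hx with rfl | rfl <;> rcases hx' with rfl | rfl
    exacts [rfl, absurd h hss', absurd h.symm hss', rfl]

theorem pairwise_disjoint_linkedSet (r : ι) : Pairwise (Disjoint on fun c => linkedSet (r, c)) :=
  fun _ _ hcc' => disjoint_left.2 fun _ hx hx' =>
    hcc' (congrArg Prod.snd (eq_of_mem_linkedSet_of_fst_eq hx hx' rfl))

theorem eq_of_forall_mem_linkedSet_eq_of_fst_ne {α : Type*} {p : LinkedIndex ι → α} {a b : α}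
    {t t' : ι × ι} (ha : ∀ x ∈ linkedSet t, p x = a) (hb : ∀ x ∈ linkedSet t', p x = b)
    (h : t.1 ≠ t'.1) : a = b :=
  (ha (Sum.inr ⟨(t, t'), h⟩) (Or.inl rfl)).symm.trans (hb _ (Or.inr rfl))

theorem mk_linkedIndex_le {ι : Type u} {c : Cardinal.{u}} (hc : ℵ₀ ≤ c) (hι : #ι ≤ c) :
    #(LinkedIndex ι) ≤ c := by
  have hι2 : #(ι × ι) ≤ c := by rw [mk_prod, lift_id]; exact mul_le_of_le hc hι hι
  have hι4 : #((ι × ι) × (ι × ι)) ≤ c := by rw [mk_prod, lift_id]; exact mul_le_of_le hc hι2 hι2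
  rw [LinkedIndex, mk_sum, lift_id, lift_id]
  exact add_le_of_le hc hι2 ((mk_subtype_le _).trans hι4)

theorem rank_prod_linkedIndex_le {K ι : Type u} [DivisionRing K] [Infinite K] (hι : #ι ≤ #K) :
    Module.rank K (K × (LinkedIndex ι → K)) ≤ 2 ^ #K := by
  have hK := aleph0_le_mk K
  calc Module.rank K (K × (LinkedIndex ι → K))
      ≤ #(K × (LinkedIndex ι → K)) := rank_le_card K _
    _ = #K ^ #(Option (LinkedIndex ι)) := by
      rw [← mk_congr (Equiv.piOptionEquivProd (β := fun _ => K)), power_def]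
    _ ≤ #K ^ #K := by
      refine power_le_power_left (mk_ne_zero K) ?_
      rw [mk_option]
      exact add_le_of_le hK (mk_linkedIndex_le hK hι) (one_le_aleph0.trans hK)
    _ = 2 ^ #K := power_self_eq hK

variable (K : Type u) (ι : Type u) [DivisionRing K] [Preorder ι]

def starFamily : Set (K × (LinkedIndex ι → K)) :=
  {p | p.1 ≠ 0 ∧ ∃ t : ι × ι, t.2 < t.1 ∧ ∀ x ∈ linkedSet t, p.2 x = p.1}

variable {K ι}

theorem smul_mem_starFamily {a : K} (ha : a ≠ 0) {p : K × (LinkedIndex ι → K)}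
    (hp : p ∈ starFamily K ι) : a • p ∈ starFamily K ι := by
  obtain ⟨hp0, t, ht, hpt⟩ := hp
  exact ⟨smul_ne_zero ha hp0, t, ht, fun x hx => by simp [hpt x hx]⟩

theorem exists_translate_subset_starFamily_of_embedding {G : Set (K × (LinkedIndex ι → K))}
    {a : K} (ha : ∀ g ∈ G, a + g.1 ≠ 0) {r : ι} (e : G ↪ Iio r) :
    ∃ φ, (fun g => φ + g) '' G ⊆ starFamily K ι := by
  obtain ⟨ψ, hψ⟩ :=
    exists_forall_mem_eq_of_pairwise_disjoint (B := fun g : G => linkedSet (r, e g))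
      (fun g g' hgg' => pairwise_disjoint_linkedSet r fun h => hgg' (e.injective (Subtype.ext h)))
          (fun (g : G) x => a + g.1.1 - g.1.2 x)
  refine ⟨(a, ψ), ?_⟩
  rintro _ ⟨g, hg, rfl⟩
  refine ⟨ha g hg, (r, e ⟨g, hg⟩), (e ⟨g, hg⟩).2, fun x hx => ?_⟩
  simp [hψ ⟨g, hg⟩ x hx]

theorem exists_translate_subset_starFamily {κ : Cardinal.{u}} (hκ : κ ≤ #K)
    {G : Set (K × (LinkedIndex κ.ord.ToType → K))} (hG : #G < κ) :
    ∃ φ, (fun g => φ + g) '' G ⊆ starFamily K κ.ord.ToType := by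
  obtain ⟨a, ha⟩ := compl_nonempty_of_mk_lt_mk (mk_image_le.trans_lt (hG.trans_le hκ) :
    #((fun g : K × (LinkedIndex κ.ord.ToType → K) => -g.1) '' G) < #K)
  obtain ⟨r, ⟨e⟩⟩ := exists_embedding_Iio_ord_toType hG
  refine exists_translate_subset_starFamily_of_embedding (fun g hg (hag : a + g.1 = 0) => ha ?_) e
  exact ⟨g, hg, neg_eq_of_add_eq_zero_left hag⟩

theorem not_translate_subset_starFamily {C : Set K} (hC : C.Nonempty)
    (hι : ∀ r : ι, #(Iio r) < #C) (φ : K × (LinkedIndex ι → K)) :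
    ¬ (fun i => φ + i) '' ((fun c => (c, 0)) '' C) ⊆ starFamily K ι := by
  intro hφ
  have key : ∀ c : C, ∃ t : ι × ι, t.2 < t.1 ∧ ∀ x ∈ linkedSet t, φ.2 x = φ.1 + c := by
    intro c
    obtain ⟨-, t, ht, hφt⟩ := hφ ⟨_, ⟨c, c.2, rfl⟩, rfl⟩
    exact ⟨t, ht, fun x hx => by simpa using hφt x hx⟩
  choose t ht hφt using key
  have hrow : ∀ c c', (t c).1 = (t c').1 := by
    intro c c'
    by_contra h
    have hcc' : c = c' := Subtype.ext (add_left_cancel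
      (eq_of_forall_mem_linkedSet_eq_of_fst_ne (hφt c) (hφt c') h))
    exact h (hcc' ▸ rfl)
  obtain ⟨c₀⟩ := hC.to_subtype
  let column : C → Iio (t c₀).1 := fun c => ⟨(t c).2, hrow c c₀ ▸ ht c⟩
  have hcolumn : Injective column := by
    intro c c' hcc'
    have htt : t c = t c' := Prod.ext (hrow c c') (congrArg Subtype.val hcc')
    exact Subtype.ext (add_left_cancel ((hφt c _ (inl_mem_linkedSet _)).symm.trans
      (htt ▸ hφt c' _ (inl_mem_linkedSet _))))
  exact (hι (t c₀).1).not_ge (mk_le_of_injective hcolumn)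

end LinkedFamily

open LinkedFamily

/-- **Theorem.** Let `K` be an infinite field of cardinality `μ`, `κ` a cardinal with
`3 ≤ κ ≤ μ`, and `V` a `K`-vector space of dimension `2 ^ μ`. Then there is a star-like
family `𝓕 ⊆ V` whose additivity equals `κ` (every set of size `< κ` admits a translate
into `𝓕`, while some set `I` of size `κ` admits none) and which is not `2`-lineable. -/
theorem exists_starLike_additivity_eq_not_two_lineable {K V : Type u} [Field K] [Infinite K]
    [AddCommGroup V] [Module K V] (κ : Cardinal.{u}) (hκ3 : 3 ≤ κ) (hκμ : κ ≤ #K)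
    (hV : Module.rank K V = 2 ^ #K) :
    ∃ 𝓕 : Set V,
      (∀ a : K, a ≠ 0 → ∀ f ∈ 𝓕, a • f ∈ 𝓕) ∧
      (∀ G : Set V, #G < κ → ∃ φ : V, (fun g => φ + g) '' G ⊆ 𝓕) ∧
      (∃ I : Set V, #I = κ ∧ ∀ φ : V, ¬ (fun i => φ + i) '' I ⊆ 𝓕) ∧
      ¬ ∃ W : Submodule K V, (W : Set V) ⊆ 𝓕 ∪ {0} ∧ Module.rank K W = 2 := by
  have hι : #κ.ord.ToType = κ := mk_ord_toType κ
  obtain ⟨π, hπ⟩ := LinearMap.exists_surjective_of_rank_le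
    (hV ▸ rank_prod_linkedIndex_le (K := K) (hι.trans_le hκμ))
  obtain ⟨C, hC⟩ := le_mk_iff_exists_set.1 hκμ
  have hCne : C.Nonempty :=
    nonempty_coe_sort.1 <| mk_ne_zero_iff.1 <| hC ▸ (zero_lt_three.trans_le hκ3).ne'
  refine ⟨π ⁻¹' starFamily K κ.ord.ToType, fun a ha v hv => ?_,
    forall_exists_translate_subset_preimage hπ fun G => exists_translate_subset_starFamily hκμ,
    ?_, ?_⟩
  · simpa only [mem_preimage, map_smul] using smul_mem_starFamily ha hv
  · obtain ⟨J, hJ, hJπ⟩ := exists_not_translate_subset_preimage hπ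
      (not_translate_subset_starFamily hCne fun r =>
        ((mk_Iio_lt r (by simp)).trans_eq hι).trans_eq hC.symm)
    exact ⟨J, hJ.trans (mk_image_eq (Prod.mk_left_injective 0)) |>.trans hC, hJπ⟩
  · rintro ⟨W, hW, hrank⟩
    have := Submodule.rank_le_of_subset_union_zero (LinearMap.fst K K _ ∘ₗ π) (fun _ hv => hv.1) hW
    rw [hrank, Module.rank_self] at this
    exact absurd this (by norm_num)
end

section
/- Let 𝓙 be a collection of subsets of ℝ that is closed under taking subsets, closed under countable unions, translation invariant (if A ∈ 𝓙 and t ∈ ℝ then t + A ∈ 𝓙), and proper (ℝ ∉ 𝓙). Let 𝓕 ⊆ ℝ be 𝓙-residual, i.e., ℝ \ 𝓕 ∈ 𝓙. Then for every set F ⊆ ℝ with #F < add(𝓙) there exists t ∈ ℝ such that t + F ⊆ 𝓕; that is, the additivity A(𝓕) of 𝓕 (as a subset of the additive group ℝ) is at least add(𝓙). -/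
open Cardinal

/-- Let `𝓙` be a proper, translation-invariant σ-ideal of subsets of `ℝ` and let
`𝓕 ⊆ ℝ` be `𝓙`-residual. Then every set `F ⊆ ℝ` of cardinality less than the additivity
`add(𝓙) = sInf {#𝓖 : 𝓖 ⊆ 𝓙, ⋃₀ 𝓖 ∉ 𝓙}` admits a translate into `𝓕`; that is,
`A(𝓕) ≥ add(𝓙)`. -/
theorem additivity_of_residual_ge_add_ideal (𝓙 : Set (Set ℝ))
    (hdown : ∀ A ∈ 𝓙, ∀ B : Set ℝ, B ⊆ A → B ∈ 𝓙)
    (hcount : ∀ f : ℕ → Set ℝ, (∀ n, f n ∈ 𝓙) → (⋃ n, f n) ∈ 𝓙)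
    (htrans : ∀ A ∈ 𝓙, ∀ t : ℝ, (fun x => t + x) '' A ∈ 𝓙)
    (hproper : (Set.univ : Set ℝ) ∉ 𝓙)
    (𝓕 : Set ℝ) (hres : 𝓕ᶜ ∈ 𝓙)
    (F : Set ℝ)
    (hF : #F < sInf {c : Cardinal |
      ∃ 𝓖 : Set (Set ℝ), 𝓖 ⊆ 𝓙 ∧ ⋃₀ 𝓖 ∉ 𝓙 ∧ #𝓖 = c}) :
    ∃ t : ℝ, (fun f => t + f) '' F ⊆ 𝓕 := by
  set 𝓖 : Set (Set ℝ) := (fun f : ℝ => (fun x => (-f) + x) '' 𝓕ᶜ) '' F with h𝓖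
  have hsub : 𝓖 ⊆ 𝓙 := by
    rintro _ ⟨f, _, rfl⟩
    exact htrans _ hres (-f)
  have hcard : #𝓖 ≤ #F := Cardinal.mk_image_le
  have hUnion : ⋃₀ 𝓖 ∈ 𝓙 := by
    by_contra hU
    have : sInf {c : Cardinal |
        ∃ 𝓖' : Set (Set ℝ), 𝓖' ⊆ 𝓙 ∧ ⋃₀ 𝓖' ∉ 𝓙 ∧ #𝓖' = c} ≤ #𝓖 :=
      csInf_le' ⟨𝓖, hsub, hU, rfl⟩
    exact absurd (this.trans hcard) (not_le.mpr hF)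
  have hne : ⋃₀ 𝓖 ≠ Set.univ := by
    intro h
    exact hproper (h ▸ hUnion)
  obtain ⟨t, ht⟩ : ∃ t : ℝ, t ∉ ⋃₀ 𝓖 := by
    rcases Set.ne_univ_iff_exists_notMem _ |>.mp hne with ⟨t, ht⟩
    exact ⟨t, ht⟩
  refine ⟨t, ?_⟩
  rintro _ ⟨f, hf, rfl⟩
  by_contra hmem
  exact ht ⟨_, ⟨f, hf, rfl⟩, ⟨t + f, hmem, by ring⟩⟩
end

section
/- Let K be an infinite field, V a vector space over K, and κ a cardinal with #K < κ. Suppose 𝓕 ⊆ V is star-like and for every G ⊆ V with #G < κ there exists φ ∈ V with φ + G ⊆ 𝓕 (i.e., A(𝓕) ≥ κ). Assume there exists a K-linear subspace X of V with X ∩ 𝓕 ⊆ {0} and dim X = τ, where τ ≤ κ. Then the set 𝓑 of K-linear subspaces of V that are maximal with respect to inclusion among subspaces contained in 𝓕 ∪ {0} has cardinality at least τ. -/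
open Cardinal

/-- Cardinality bound on spans: over a field of size `< κ` (infinite `κ`), the span of a set
of size `< κ` has size `< κ`. -/
lemma mk_span_lt {K V : Type u} [Field K] [Infinite K] [AddCommGroup V] [Module K V]
    {κ : Cardinal.{u}} (hK : #K < κ) (s : Set V) (hs : #s < κ) :
    #(Submodule.span K s : Submodule K V) < κ := by
  have hκ : ℵ₀ ≤ κ := le_of_lt (lt_of_le_of_lt (aleph0_le_mk K) hK)
  rcases s.eq_empty_or_nonempty with rfl | hne
  · rw [Submodule.span_empty]
    have h1 : #(⊥ : Submodule K V) = 1 := mk_eq_one _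
    rw [h1]
    exact lt_of_lt_of_le one_lt_aleph0 hκ
  · have : Nonempty ↥s := hne.to_subtype
    have h1 : ((Submodule.span K s : Submodule K V) : Set V)
        = Set.range (Finsupp.linearCombination K ((↑) : s → V)) := by
      rw [Finsupp.span_eq_range_linearCombination]
      rfl
    have h2 : #(Submodule.span K s : Submodule K V) ≤ #(↥s →₀ K) :=
      calc #(Submodule.span K s : Submodule K V)
          = #(Set.range (Finsupp.linearCombination K ((↑) : s → V))) :=
            Cardinal.mk_congr (Equiv.setCongr h1)
        _ ≤ #(↥s →₀ K) := Cardinal.mk_range_le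
    have h3 : #(↥s →₀ K) = max #↥s #K := Cardinal.mk_finsupp_of_infinite' ↥s K
    rw [h3] at h2
    exact lt_of_le_of_lt h2 (max_lt hs hK)

/-- **Theorem.** Let `K` be an infinite field, `V` a `K`-vector space and `κ > #K` a
cardinal. Suppose `𝓕 ⊆ V` is star-like with additivity at least `κ`, and there is a
subspace `X` with `X ∩ 𝓕 ⊆ {0}` and `dim X = τ ≤ κ`. Then the collection `𝓑` of maximal
subspaces contained in `𝓕 ∪ {0}` has cardinality at least `τ`. -/
theorem card_maximal_subspaces_ge {K V : Type u} [Field K] [Infinite K]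
    [AddCommGroup V] [Module K V] (κ τ : Cardinal.{u}) (hK : #K < κ) (hτ : τ ≤ κ)
    (𝓕 : Set V)
    (hstar : ∀ a : K, a ≠ 0 → ∀ f ∈ 𝓕, a • f ∈ 𝓕)
    (hadd : ∀ G : Set V, #G < κ → ∃ φ : V, (fun g => φ + g) '' G ⊆ 𝓕)
    (X : Submodule K V) (hX𝓕 : (X : Set V) ∩ 𝓕 ⊆ {0}) (hXdim : Module.rank K X = τ) :
    τ ≤ #{B : Submodule K V | (B : Set V) ⊆ 𝓕 ∪ {0} ∧
      ∀ B' : Submodule K V, (B' : Set V) ⊆ 𝓕 ∪ {0} → B ≤ B' → B' = B} := by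
  classical
  set 𝓑 : Set (Submodule K V) := {B : Submodule K V | (B : Set V) ⊆ 𝓕 ∪ {0} ∧
      ∀ B' : Submodule K V, (B' : Set V) ⊆ 𝓕 ∪ {0} → B ≤ B' → B' = B} with h𝓑
  have hκinf : ℵ₀ ≤ κ := le_of_lt (lt_of_le_of_lt (aleph0_le_mk K) hK)
  -- Zorn: every subspace inside 𝓕 ∪ {0} is contained in a member of 𝓑
  have zorn : ∀ C : Submodule K V, (C : Set V) ⊆ 𝓕 ∪ {0} → ∃ B ∈ 𝓑, C ≤ B := by
    intro C hC
    have hub : ∀ c ⊆ {B : Submodule K V | (B : Set V) ⊆ 𝓕 ∪ {0}},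
        IsChain (· ≤ ·) c → ∀ y ∈ c, ∃ ub ∈ {B : Submodule K V | (B : Set V) ⊆ 𝓕 ∪ {0}},
          ∀ z ∈ c, z ≤ ub := by
      intro c hcs hchain y hy
      refine ⟨sSup c, ?_, fun z hz => le_sSup hz⟩
      intro u hu
      have hmem : u ∈ sSup c := hu
      rw [Submodule.mem_sSup_of_directed ⟨y, hy⟩ (hchain.directedOn)] at hmem
      obtain ⟨B, hBc, huB⟩ := hmem
      exact hcs hBc huB
    obtain ⟨m, hCm, hm⟩ := zorn_le_nonempty₀
      {B : Submodule K V | (B : Set V) ⊆ 𝓕 ∪ {0}} hub C hC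
    exact ⟨m, ⟨hm.1, fun B' hB' hle => le_antisymm (hm.2 hB' hle) hle⟩, hCm⟩
  by_contra hcon
  have hlt : #𝓑 < τ := not_le.mp hcon
  have hτ0 : τ ≠ 0 := fun h => by simp [h] at hlt
  -- a nonzero element of X
  obtain ⟨x₀, hx₀X, hx₀⟩ : ∃ x ∈ X, x ≠ (0 : V) := by
    by_contra hall
    push_neg at hall
    have : X = ⊥ := by
      ext x; simp only [Submodule.mem_bot]
      exact ⟨fun hx => hall x hx, fun h => h ▸ X.zero_mem⟩
    rw [this, rank_bot] at hXdim
    exact hτ0 hXdim.symm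
  have hx₀F : x₀ ∉ 𝓕 := fun h => hx₀ (hX𝓕 ⟨hx₀X, h⟩)
  -- the escape step
  have escape : ∀ s : Set V, #s < κ → ∀ B : Submodule K V, (B : Set V) ⊆ 𝓕 ∪ {0} →
      ∃ v : V, v ∉ B ∧ ∀ a : K, a ≠ 0 → ∀ n ∈ Submodule.span K s, a • v + n ∈ 𝓕 := by
    intro s hs B hB
    set N : Submodule K V := Submodule.span K (s ∪ {x₀}) with hN
    have hNcard : #(N : Set V) < κ := by
      apply mk_span_lt hK
      refine lt_of_le_of_lt (Cardinal.mk_union_le s {x₀}) ?_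
      have h1 : #({x₀} : Set V) = 1 := Cardinal.mk_singleton x₀
      rw [h1]
      exact Cardinal.add_lt_of_lt hκinf hs (lt_of_lt_of_le one_lt_aleph0 hκinf)
    obtain ⟨φ, hφ⟩ := hadd (N : Set V) hNcard
    have hφ' : ∀ g ∈ N, φ + g ∈ 𝓕 := fun g hg => hφ ⟨g, hg, rfl⟩
    have hsN : Submodule.span K s ≤ N := Submodule.span_mono Set.subset_union_left
    have hx₀N : x₀ ∈ N := Submodule.subset_span (Set.mem_union_right _ rfl)
    by_cases hmem : φ ∈ B
    · refine ⟨φ + x₀, ?_, ?_⟩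
      · intro hc
        have hx₀B : x₀ ∈ B := by
          have := B.sub_mem hc hmem
          simpa using this
        rcases hB hx₀B with h | h
        · exact hx₀F h
        · exact hx₀ h
      · intro a ha n hn
        have harg : x₀ + a⁻¹ • n ∈ N := N.add_mem hx₀N (N.smul_mem _ (hsN hn))
        have h𝓕 : φ + (x₀ + a⁻¹ • n) ∈ 𝓕 := hφ' _ harg
        have := hstar a ha _ h𝓕
        have heq : a • (φ + (x₀ + a⁻¹ • n)) = a • (φ + x₀) + n := by
          rw [smul_add, smul_add, smul_inv_smul₀ ha, smul_add, ← add_assoc]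
        rwa [heq] at this
    · refine ⟨φ, hmem, ?_⟩
      intro a ha n hn
      have h𝓕 : φ + a⁻¹ • n ∈ 𝓕 := hφ' _ (N.smul_mem _ (hsN hn))
      have := hstar a ha _ h𝓕
      have heq : a • (φ + a⁻¹ • n) = a • φ + n := by
        rw [smul_add, smul_inv_smul₀ ha]
      rwa [heq] at this
  -- well-order 𝓑 and build escape vectors by transfinite recursion
  let ι := ↥𝓑
  have hιτ : #ι < τ := hlt
  have hικ : #ι < κ := lt_of_lt_of_le hιτ hτ
  let r : ι → ι → Prop := WellOrderingRel
  have wf : WellFounded r := IsWellFounded.wf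
  let gen : ∀ i : ι, (∀ j : ι, r j i → V) → Set V := fun i rec =>
    Set.range (fun p : {j : ι // r j i} => rec p.1 p.2)
  have gencard : ∀ (i : ι) (rec : ∀ j : ι, r j i → V), #(gen i rec) < κ := by
    intro i rec
    refine lt_of_le_of_lt (Cardinal.mk_range_le.trans (Cardinal.mk_subtype_le _)) hικ
  let v : ι → V := wf.fix (fun i rec =>
    Classical.choose (escape (gen i rec) (gencard i rec) i.1 i.2.1))
  have hv : ∀ i : ι, v i ∉ (i.1 : Submodule K V) ∧ ∀ a : K, a ≠ 0 →
      ∀ n ∈ Submodule.span K (v '' {j | r j i}), a • v i + n ∈ 𝓕 := by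
    intro i
    have h1 : v i = Classical.choose (escape (gen i (fun j _ => v j))
        (gencard i (fun j _ => v j)) i.1 i.2.1) := wf.fix_eq _ i
    have h2 := Classical.choose_spec (escape (gen i (fun j _ => v j))
        (gencard i (fun j _ => v j)) i.1 i.2.1)
    rw [← h1] at h2
    have h3 : gen i (fun j _ => v j) = v '' {j | r j i} := by
      rw [Set.image_eq_range]
      rfl
    rwa [h3] at h2
  -- the nested subspaces
  let M : ι → Submodule K V := fun i =>
    Submodule.span K (v '' {j | r j i}) ⊔ Submodule.span K {v i}
  have hMle : ∀ i j : ι, r j i → M j ≤ Submodule.span K (v '' {j | r j i}) := by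
    intro i j hji
    have h1 : Submodule.span K (v '' {k | r k j}) ≤ Submodule.span K (v '' {k | r k i}) := by
      apply Submodule.span_mono
      apply Set.image_mono
      intro k hk
      have hk' : r k j := hk
      exact @IsTrans.trans ι WellOrderingRel (inferInstanceAs (IsTrans ι WellOrderingRel))
        k j i hk' hji
    have h2 : Submodule.span K {v j} ≤ Submodule.span K (v '' {k | r k i}) := by
      apply Submodule.span_le.mpr
      intro u hu
      rw [Set.mem_singleton_iff] at hu
      subst hu
      exact Submodule.subset_span ⟨j, hji, rfl⟩
    exact sup_le h1 h2
  have hMdir : ∀ i j : ι, M i ≤ M j ∨ M j ≤ M i := by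
    intro i j
    rcases trichotomous_of r i j with h | h | h
    · exact Or.inl ((hMle j i h).trans le_sup_left)
    · subst h; exact Or.inl le_rfl
    · exact Or.inr ((hMle i j h).trans le_sup_left)
  -- each M i is inside 𝓕 ∪ {0}
  have hM : ∀ i : ι, ((M i : Submodule K V) : Set V) ⊆ 𝓕 ∪ {0} := by
    intro i
    induction i using wf.induction with
    | _ i IH =>
      have hNsub : ((Submodule.span K (v '' {j | r j i}) : Submodule K V) : Set V)
          ⊆ 𝓕 ∪ {0} := by
        intro u hu
        by_cases hne : ∃ j : ι, r j i
        · have : Nonempty {j : ι // r j i} := ⟨⟨hne.choose, hne.choose_spec⟩⟩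
          have hsub : Submodule.span K (v '' {j | r j i})
              ≤ ⨆ p : {j : ι // r j i}, M p.1 := by
            apply Submodule.span_le.mpr
            rintro u ⟨j, hj, rfl⟩
            have : v j ∈ M j := le_sup_right (a := Submodule.span K (v '' {k | r k j}))
              (Submodule.mem_span_singleton_self (v j))
            exact Submodule.mem_iSup_of_mem ⟨j, hj⟩ this
          have hu' : u ∈ ⨆ p : {j : ι // r j i}, M p.1 := hsub hu
          have hdir : Directed (· ≤ ·) (fun p : {j : ι // r j i} => M p.1) := by
            intro p q
            rcases hMdir p.1 q.1 with h | h
            · exact ⟨q, h, le_rfl⟩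
            · exact ⟨p, le_rfl, h⟩
          rw [Submodule.mem_iSup_of_directed _ hdir] at hu'
          obtain ⟨p, hp⟩ := hu'
          exact IH p.1 p.2 hp
        · push_neg at hne
          have hempty : {j | r j i} = (∅ : Set ι) := by
            ext j; simp [hne j]
          rw [hempty, Set.image_empty, Submodule.span_empty] at hu
          right
          simpa using hu
      intro u hu
      rw [SetLike.mem_coe, Submodule.mem_sup] at hu
      obtain ⟨y, hy, z, hz, rfl⟩ := hu
      rw [Submodule.mem_span_singleton] at hz
      obtain ⟨a, rfl⟩ := hz
      by_cases ha : a = 0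
      · subst ha
        rw [zero_smul, add_zero]
        exact hNsub hy
      · left
        have := (hv i).2 a ha y hy
        rwa [add_comm] at this
  -- the union of all M i
  have hιne : Nonempty ι := by
    obtain ⟨B, hB, _⟩ := zorn ⊥ (by intro u hu; right; simpa using hu)
    exact ⟨⟨B, hB⟩⟩
  have hDdir : Directed (· ≤ ·) M := by
    intro i j
    rcases hMdir i j with h | h
    · exact ⟨j, h, le_rfl⟩
    · exact ⟨i, le_rfl, h⟩
  have hDsub : ((⨆ i, M i : Submodule K V) : Set V) ⊆ 𝓕 ∪ {0} := by
    intro u hu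
    have hu' : u ∈ ⨆ i, M i := hu
    rw [Submodule.mem_iSup_of_directed _ hDdir] at hu'
    obtain ⟨i, hi⟩ := hu'
    exact hM i hi
  obtain ⟨B, hB, hle⟩ := zorn _ hDsub
  have hvB : v ⟨B, hB⟩ ∈ B := by
    have h1 : v ⟨B, hB⟩ ∈ M ⟨B, hB⟩ :=
      le_sup_right (a := Submodule.span K (v '' {k | r k ⟨B, hB⟩}))
        (Submodule.mem_span_singleton_self _)
    exact hle (le_iSup M ⟨B, hB⟩ h1)
  exact (hv ⟨B, hB⟩).1 hvB
end

section
/- The family ES(ℝ) of everywhere surjective functions has property B(e_𝔠, e_𝔠): there exists a set 𝓑 of ℝ-linear subspaces of ℝ^ℝ with #𝓑 ≥ e_𝔠 such that every B ∈ 𝓑 satisfies B ⊆ ES(ℝ) ∪ {0} and dim_ℝ B ≥ e_𝔠, and ES(ℝ) ∪ {0} = ⋃ 𝓑. -/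
open Cardinal

/-- `f` is everywhere surjective: `f(U) = ℝ` for every nonempty open `U ⊆ ℝ`. -/
def IsEverywhereSurjective (f : ℝ → ℝ) : Prop :=
  ∀ U : Set ℝ, IsOpen U → U.Nonempty → f '' U = Set.univ

/-- The cardinal `e_𝔠`: the least cardinality of a family `F ⊆ ℝ^ℝ` such that every
`φ : ℝ → ℝ` agrees with some member of `F` on a set of cardinality `< 𝔠`. -/
noncomputable def eContinuum : Cardinal :=
  sInf {c : Cardinal | ∃ F : Set (ℝ → ℝ), #F = c ∧
    ∀ φ : ℝ → ℝ, ∃ f ∈ F, #{x : ℝ | f x = φ x} < Cardinal.continuum}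

/-!
A diagonal argument along an injection `F × ℝ ↪ ℝ` shows `𝔠 < e_𝔠`. Fix an everywhere
surjective `σ` and, for each small ball, a section `ψ` of `σ` with values in that ball. If
`#G < e_𝔠`, the definition of `e_𝔠` yields one `φ` agreeing somewhere with every
`s ↦ y - g (ψ s)` (`g ∈ G`, `y ∈ ℝ`), so `φ ∘ σ + g` takes every value `y` in every ball.
Hence a subspace maximal among those inside `ES ∪ {0}` has dimension at least `e_𝔠`: otherwise
it has fewer than `e_𝔠` elements and can be enlarged by such a `φ ∘ σ`. Every everywhere
surjective function lies in such a subspace, and deleting one vector from a basis of one of them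
gives `e_𝔠` distinct subspaces of the same dimension.
-/

universe u

theorem not_isEverywhereSurjective_zero : ¬ IsEverywhereSurjective 0 := by
  intro h
  obtain ⟨x, -, hx⟩ : (1 : ℝ) ∈ (0 : ℝ → ℝ) '' Set.univ :=
    (h Set.univ isOpen_univ Set.univ_nonempty).symm ▸ Set.mem_univ 1
  exact zero_ne_one hx

theorem IsEverywhereSurjective.smul {f : ℝ → ℝ} (hf : IsEverywhereSurjective f) {c : ℝ}
    (hc : c ≠ 0) : IsEverywhereSurjective (c • f) := by
  intro U hU hne
  rw [show c • f = (c * ·) ∘ f from rfl, Set.image_comp, hf U hU hne]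
  exact Set.image_univ_of_surjective (mul_left_surjective₀ hc)

/-- Every coset `x + ℚ` is dense, so a surjection `ℝ ⧸ ℚ → ℝ` composed with the quotient map is
everywhere surjective. -/
theorem exists_isEverywhereSurjective : ∃ σ : ℝ → ℝ, IsEverywhereSurjective σ := by
  set Q : AddSubgroup ℝ := (Rat.castHom ℝ).toAddMonoidHom.range
  have hQ : #Q < 𝔠 := by
    have : Countable Q := (Set.countable_range ((↑) : ℚ → ℝ)).to_subtype
    exact mk_le_aleph0.trans_lt aleph0_lt_continuum
  have hquot : #ℝ ≤ #(ℝ ⧸ Q) := by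
    by_contra! h
    rw [mk_real] at h
    have hprod := (AddSubgroup.addGroupEquivQuotientProdAddSubgroup (s := Q)).cardinal_eq
    rw [mk_prod, lift_id, lift_id, mk_real] at hprod
    exact (mul_lt_of_lt aleph0_le_continuum h hQ).ne hprod.symm
  obtain ⟨e⟩ := (le_def _ _).1 hquot
  refine ⟨fun x => Function.invFun e (x : ℝ ⧸ Q), fun U hU ⟨u, hu⟩ => ?_⟩
  refine Set.eq_univ_of_forall fun y => ?_
  obtain ⟨x, hx⟩ := QuotientAddGroup.mk_surjective (e y)
  obtain ⟨q, hq⟩ : ∃ q : ℚ, x + q ∈ U :=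
    Rat.denseRange_cast.exists_mem_open (hU.preimage (continuous_const_add x)) ⟨u - x, by simpa⟩
  refine ⟨x + q, hq, ?_⟩
  show Function.invFun e ((x + q : ℝ) : ℝ ⧸ Q) = y
  rw [QuotientAddGroup.mk_add_of_mem x (s := Q) (b := q) ⟨q, rfl⟩, hx]
  exact Function.leftInverse_invFun e.injective y

theorem exists_forall_mk_le_mk_setOf_eq {α β : Type u} [Infinite α] [Nonempty β]
    {F : Set (α → β)} (hF : #F ≤ #α) : ∃ φ : α → β, ∀ f ∈ F, #α ≤ #{x | f x = φ x} := by
  obtain ⟨e⟩ : Nonempty (F × α ↪ α) := by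
    refine (le_def _ _).1 ?_
    rw [mk_prod, lift_id, lift_id]
    exact (mul_le_mul_left hF _).trans (mul_eq_self (aleph0_le_mk α)).le
  refine ⟨Function.extend e (fun p => p.1.1 (e p)) fun _ => Classical.arbitrary β,
    fun f hf => mk_le_of_injective (f := fun x => ⟨e (⟨f, hf⟩, x), ?_⟩) fun x y hxy => ?_⟩
  · exact (e.injective.extend_apply (fun p => p.1.1 (e p)) _ (⟨f, hf⟩, x)).symm
  · simpa using e.injective (Subtype.ext_iff.1 hxy)

theorem continuum_lt_eContinuum : 𝔠 < eContinuum := by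
  obtain ⟨F, hFcard, hF⟩ : eContinuum ∈ {c : Cardinal | ∃ F : Set (ℝ → ℝ), #F = c ∧
      ∀ φ : ℝ → ℝ, ∃ f ∈ F, #{x : ℝ | f x = φ x} < 𝔠} :=
    csInf_mem ⟨_, Set.univ, rfl, fun φ => ⟨φ + 1, trivial, by simp [continuum_pos]⟩⟩
  by_contra! h
  obtain ⟨φ, hφ⟩ := exists_forall_mk_le_mk_setOf_eq (F := F) (by rwa [mk_real, hFcard])
  obtain ⟨f, hf, hlt⟩ := hF φ
  exact (hφ f hf).not_gt (by rwa [mk_real])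

theorem exists_forall_continuum_le_mk_setOf_eq_of_mk_lt {F : Set (ℝ → ℝ)}
    (hF : #F < eContinuum) : ∃ φ : ℝ → ℝ, ∀ f ∈ F, 𝔠 ≤ #{x | f x = φ x} := by
  by_contra! h
  exact hF.not_ge (csInf_le' ⟨F, rfl, h⟩)

theorem exists_add_isEverywhereSurjective {G : Set (ℝ → ℝ)} (hG : #G < eContinuum) :
    ∃ h : ℝ → ℝ, ∀ g ∈ G, IsEverywhereSurjective (h + g) := by
  obtain ⟨σ, hσ⟩ := exists_isEverywhereSurjective
  have hball (c : ℝ) (n : ℕ) (s : ℝ) : ∃ x ∈ Metric.ball c (1 / (n + 1)), σ x = s :=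
    Set.eq_univ_iff_forall.1
      (hσ _ Metric.isOpen_ball (Metric.nonempty_ball.2 Nat.one_div_pos_of_nat)) s
  choose ψ hψball hψ using hball
  set F : Set (ℝ → ℝ) :=
    Set.range fun p : G × ℝ × ℕ × ℝ => fun s => p.2.2.2 - p.1.1 (ψ p.2.1 p.2.2.1 s)
  have hF : #F < eContinuum := by
    refine mk_range_le.trans_lt ?_
    rw [mk_prod, lift_id, lift_id]
    refine mul_lt_of_lt (aleph0_le_continuum.trans continuum_lt_eContinuum.le) hG ?_
    simpa [mk_real] using continuum_lt_eContinuum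
  obtain ⟨φ, hφ⟩ := exists_forall_continuum_le_mk_setOf_eq_of_mk_lt hF
  refine ⟨φ ∘ σ, fun g hg U hU ⟨u, hu⟩ => Set.eq_univ_of_forall fun y => ?_⟩
  obtain ⟨ε, hε, hεU⟩ := Metric.isOpen_iff.1 hU u hu
  obtain ⟨n, hn⟩ := exists_nat_one_div_lt hε
  obtain ⟨s, hs⟩ : Set.Nonempty {s | y - g (ψ u n s) = φ s} := by
    have hagree := hφ _ ⟨(⟨g, hg⟩, u, n, y), rfl⟩
    exact Set.nonempty_coe_sort.1 (mk_ne_zero_iff.1 (continuum_pos.trans_le hagree).ne')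
  refine ⟨ψ u n s, hεU (Metric.ball_subset_ball hn.le (hψball u n s)), ?_⟩
  show φ (σ _) + g _ = y
  rw [hψ, ← hs.out]
  ring

theorem sup_span_singleton_subset {M : Submodule ℝ (ℝ → ℝ)}
    (hM : (M : Set (ℝ → ℝ)) ⊆ {f | IsEverywhereSurjective f} ∪ {0}) {h : ℝ → ℝ}
    (hh : ∀ g ∈ M, IsEverywhereSurjective (h + g)) :
    ((M ⊔ Submodule.span ℝ {h} : Submodule ℝ (ℝ → ℝ)) : Set (ℝ → ℝ)) ⊆
      {f | IsEverywhereSurjective f} ∪ {0} := by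
  rintro _ hx
  obtain ⟨m, hm, _, hc, rfl⟩ := Submodule.mem_sup.1 hx
  obtain ⟨c, rfl⟩ := Submodule.mem_span_singleton.1 hc
  rcases eq_or_ne c 0 with rfl | hc
  · simpa using hM hm
  · left
    rw [show m + c • h = c • (h + c⁻¹ • m) by rw [smul_add, smul_inv_smul₀ hc, add_comm]]
    exact (hh _ (M.smul_mem _ hm)).smul hc

theorem exists_mem_submodule_subset_eContinuum_le_rank {f : ℝ → ℝ}
    (hf : IsEverywhereSurjective f) :
    ∃ M : Submodule ℝ (ℝ → ℝ), f ∈ M ∧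
      (M : Set (ℝ → ℝ)) ⊆ {f | IsEverywhereSurjective f} ∪ {0} ∧
      eContinuum ≤ Module.rank ℝ M := by
  have hspan : (Submodule.span ℝ {f} : Set (ℝ → ℝ)) ⊆ {f | IsEverywhereSurjective f} ∪ {0} := by
    simpa using sup_span_singleton_subset (M := ⊥) (by simp) (by simpa using hf)
  obtain ⟨M, hfM, hM, hmax⟩ := zorn_le_nonempty₀
    {M : Submodule ℝ (ℝ → ℝ) | (M : Set (ℝ → ℝ)) ⊆ {f | IsEverywhereSurjective f} ∪ {0}}
    (fun c hc hchain N hN => ⟨sSup c, fun g hg => by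
      obtain ⟨N, hN, hgN⟩ := (Submodule.mem_sSup_of_directed ⟨N, hN⟩ hchain.directedOn).1 hg
      exact hc hN hgN, fun _ => le_sSup⟩) _ hspan
  refine ⟨M, hfM (Submodule.mem_span_singleton_self f), hM, ?_⟩
  by_contra! hrank
  have hcard : #M < eContinuum := by
    by_contra! hle
    refine hrank.not_ge (Module.Free.rank_eq_mk_of_infinite_lt ℝ M ?_ ▸ hle)
    simpa [mk_real] using continuum_lt_eContinuum.trans_le hle
  obtain ⟨h, hh⟩ := exists_add_isEverywhereSurjective hcard
  have hhM : h ∉ M := fun hmem =>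
    not_isEverywhereSurjective_zero (by simpa using hh (-h) (neg_mem hmem))
  exact hhM (hmax (sup_span_singleton_subset hM hh) le_sup_left
    (Submodule.mem_sup_right (Submodule.mem_span_singleton_self h)))

theorem Submodule.rank_le_mk_setOf_le_rank_eq {K V : Type*} [DivisionRing K] [AddCommGroup V]
    [Module K V] (M : Submodule K V) (hM : ℵ₀ ≤ Module.rank K M) :
    Module.rank K M ≤ #{W : Submodule K V | W ≤ M ∧ Module.rank K W = Module.rank K M} := by
  set b := Module.Basis.ofVectorSpace K M
  set ι := Module.Basis.ofVectorSpaceIndex K M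
  have hι : #ι = Module.rank K M := b.mk_eq_rank''
  have : Infinite ι := infinite_iff.2 (hι ▸ hM)
  set v : ι → V := fun i => b i
  have hv : LinearIndependent K v := b.linearIndependent.map' M.subtype M.ker_subtype
  set D : ι → Submodule K V := fun i => span K (v '' {i}ᶜ)
  have hD_le (i : ι) : D i ≤ M := span_le.2 (by rintro _ ⟨j, -, rfl⟩; exact (b j).2)
  have hD_rank (i : ι) : Module.rank K (D i) = Module.rank K M := by
    have hrank := rank_span (hv.comp ((↑) : ({i}ᶜ : Set ι) → ι) Subtype.coe_injective)
    rw [Set.range_comp, Subtype.range_coe] at hrank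
    have hsingleton : #({i} : Set ι) < #ι := by
      simpa using one_lt_aleph0.trans_le (aleph0_le_mk ι)
    rw [hrank, mk_image_eq hv.injective, mk_compl_of_infinite _ hsingleton, hι]
  have hD_inj : Function.Injective D := by
    intro i j hij
    by_contra hne
    refine hv.notMem_span_image (s := {i}ᶜ) (x := i) (by simp) ?_
    rw [show span K (v '' {i}ᶜ) = D j from hij]
    exact subset_span ⟨i, hne, rfl⟩
  calc Module.rank K M = #(Set.range D) := by rw [mk_range_eq D hD_inj, hι]
    _ ≤ _ := mk_le_mk_of_subset (by rintro _ ⟨i, rfl⟩; exact ⟨hD_le i, hD_rank i⟩)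

/-- **Corollary.** The family `ES(ℝ)` of everywhere surjective functions has property
`B(e_𝔠, e_𝔠)`: `ES(ℝ) ∪ {0}` is the union of at least `e_𝔠` many linear subspaces of
`ℝ^ℝ`, each contained in `ES(ℝ) ∪ {0}` and each of dimension at least `e_𝔠`. -/
theorem everywhereSurjective_property_B :
    ∃ 𝓑 : Set (Submodule ℝ (ℝ → ℝ)),
      eContinuum ≤ #𝓑 ∧
      (∀ B ∈ 𝓑, (B : Set (ℝ → ℝ)) ⊆ {f | IsEverywhereSurjective f} ∪ {0} ∧
        eContinuum ≤ Module.rank ℝ B) ∧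
      {f | IsEverywhereSurjective f} ∪ {0} = ⋃ B ∈ 𝓑, (B : Set (ℝ → ℝ)) := by
  choose M hfM hM hrank using fun f (hf : IsEverywhereSurjective f) =>
    exists_mem_submodule_subset_eContinuum_le_rank hf
  obtain ⟨σ, hσ⟩ := exists_isEverywhereSurjective
  refine ⟨{B | (B : Set (ℝ → ℝ)) ⊆ {f | IsEverywhereSurjective f} ∪ {0} ∧
    eContinuum ≤ Module.rank ℝ B}, ?_, fun B hB => hB, ?_⟩
  · have hinf : ℵ₀ ≤ Module.rank ℝ (M σ hσ) :=
      aleph0_le_continuum.trans (continuum_lt_eContinuum.le.trans (hrank σ hσ))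
    calc eContinuum ≤ Module.rank ℝ (M σ hσ) := hrank σ hσ
      _ ≤ _ := (M σ hσ).rank_le_mk_setOf_le_rank_eq hinf
      _ ≤ _ := mk_le_mk_of_subset fun W hW => by exact
        ⟨fun _ hg => hM σ hσ (hW.1 hg), hW.2 ▸ hrank σ hσ⟩
  · refine Set.Subset.antisymm ?_ (Set.iUnion₂_subset fun B hB => hB.1)
    rintro f (hf | rfl)
    · exact Set.mem_biUnion (x := M f hf) ⟨hM f hf, hrank f hf⟩ (hfM f hf)
    · exact Set.mem_biUnion (x := M σ hσ) ⟨hM σ hσ, hrank σ hσ⟩ (M σ hσ).zero_mem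
end

section
/- The family SZ(ℝ) of Sierpiński–Zygmund functions has property B(d_𝔠, d_𝔠): there exists a set 𝓑 of ℝ-linear subspaces of ℝ^ℝ with #𝓑 ≥ d_𝔠 such that every B ∈ 𝓑 satisfies B ⊆ SZ(ℝ) ∪ {0} and dim_ℝ B ≥ d_𝔠, and SZ(ℝ) ∪ {0} = ⋃ 𝓑. -/
open Cardinal

/-- `f` is a Sierpiński–Zygmund function: `f` is not continuous on any set of
cardinality `𝔠`. -/
def IsSierpinskiZygmund (f : ℝ → ℝ) : Prop :=
  ∀ S : Set ℝ, #S = Cardinal.continuum → ¬ ContinuousOn f S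

/-- The cardinal `d_𝔠`: the least cardinality of a family `F ⊆ ℝ^ℝ` such that every
`φ : ℝ → ℝ` agrees with some member of `F` on a set of cardinality `𝔠`. -/
noncomputable def dContinuum : Cardinal :=
  sInf {c : Cardinal | ∃ F : Set (ℝ → ℝ), #F = c ∧
    ∀ φ : ℝ → ℝ, ∃ f ∈ F, #{x : ℝ | f x = φ x} = Cardinal.continuum}

/-!
A function continuous on a set `S` of size `𝔠` agrees on `S` with its limit extension from a
countable dense subset of `S`, and there are only `𝔠` such "canonical" extensions. A
diagonalization shows `𝔠 < d_𝔠`, so any family of fewer than `d_𝔠` functions is avoided by some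
`φ`: `φ` agrees with each member on fewer than `𝔠` points.

Given `f₀`, a recursion of length `d_𝔠` picks `e i` avoiding every `r • (g - w)` with `g` canonical
and `w` in the span of `f₀` and the earlier `e j`. Then each `a • f₀ + ∑ c j • e j` with `c ≠ 0`,
solved for its last term, agrees with each canonical function on fewer than `𝔠` points, so it is
Sierpiński–Zygmund; in particular the `e i` are independent. The spans of `insert f (range e)`
for Sierpiński–Zygmund `f = f₀`, together with the `d_𝔠` distinct spans of `e '' {i}ᶜ` for
`f₀ = 0`, form the required family.
-/

open Set Filter Topology Submodule

universe u

theorem exists_forall_mk_setOf_eq_lt {X Y : Type u} (hX : ℵ₀ ≤ #X) (hXY : #X ≤ #Y)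
    (F : Set (X → Y)) (hF : #F ≤ #X) : ∃ φ : X → Y, ∀ f ∈ F, #{x | f x = φ x} < #X := by
  obtain ⟨e⟩ : Nonempty (X ≃ (#X).ord.ToType) := Cardinal.eq.1 (mk_ord_toType _).symm
  obtain ⟨j⟩ : Nonempty (F ↪ (#X).ord.ToType) := by rwa [← Cardinal.le_def, mk_ord_toType]
  have hIic (i : (#X).ord.ToType) : #(Iic i) < #X := by
    rw [← Iio_insert]
    exact mk_insert_le.trans_lt (add_lt_of_lt hX (by simpa using mk_Iio_lt i)
      (one_lt_aleph0.trans_le hX))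
  -- enumerate `X` and `F` along the initial ordinal of `#X`; at the `x`-th point `φ` avoids the
  -- values of the fewer than `#X` functions enumerated no later than `x`
  have hnew (x : X) : ∃ y, ∀ f : F, j f ≤ e x → f.1 x ≠ y := by
    by_contra! h
    choose f hfj hfy using h
    have hsurj : Function.Surjective fun f : {f : F // j f ≤ e x} => f.1.1 x :=
      fun y => ⟨⟨f y, hfj y⟩, hfy y⟩
    have hinj : Function.Injective fun f : {f : F // j f ≤ e x} => (⟨j f, f.2⟩ : Iic (e x)) :=
      fun f g h => Subtype.ext (j.injective (congrArg Subtype.val h))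
    exact ((mk_le_of_surjective hsurj).trans (mk_le_of_injective hinj)).not_gt
      ((hIic (e x)).trans_le hXY)
  choose φ hφ using hnew
  refine ⟨φ, fun f hf => ?_⟩
  calc #{x | f x = φ x} ≤ #(e ⁻¹' Iio (j ⟨f, hf⟩)) :=
        mk_le_mk_of_subset fun x hx => not_le.1 fun h => hφ x ⟨f, hf⟩ h hx
    _ = #(Iio (j ⟨f, hf⟩)) := mk_preimage_equiv e _
    _ < #X := by simpa using mk_Iio_lt (j ⟨f, hf⟩)

theorem continuum_lt_dContinuum : 𝔠 < dContinuum := by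
  obtain ⟨F, hF, hcover⟩ : dContinuum ∈ {c : Cardinal | ∃ F : Set (ℝ → ℝ), #F = c ∧
      ∀ φ : ℝ → ℝ, ∃ f ∈ F, #{x : ℝ | f x = φ x} = 𝔠} :=
    csInf_mem ⟨_, univ, rfl, fun φ => ⟨φ, trivial, by simp [mk_real]⟩⟩
  by_contra! h
  obtain ⟨φ, hφ⟩ := exists_forall_mk_setOf_eq_lt (X := ℝ) (Y := ℝ) (by simp) le_rfl F
    (by rwa [hF, mk_real])
  obtain ⟨f, hf, hfφ⟩ := hcover φ
  exact (hφ f hf).ne (hfφ.trans mk_real.symm)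

theorem exists_forall_mk_setOf_eq_lt_continuum {H : Set (ℝ → ℝ)} (hH : #H < dContinuum) :
    ∃ φ : ℝ → ℝ, ∀ h ∈ H, #{x | h x = φ x} < 𝔠 := by
  by_contra! h
  refine hH.not_ge (csInf_le' ⟨H, rfl, fun φ => ?_⟩)
  obtain ⟨f, hf, hle⟩ := h φ
  exact ⟨f, hf, ((mk_set_le _).trans mk_real.le).antisymm hle⟩

section LimExtension

variable {X Y : Type*} [TopologicalSpace X] [TopologicalSpace Y] [T2Space Y] [Nonempty Y]

open scoped Classical in
noncomputable def limExtension (D : Set X) (v : X → Y) (x : X) : Y :=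
  if x ∈ D then v x else limUnder (𝓝[D] x) v

theorem limExtension_eqOn {D S : Set X} {v F : X → Y} (hF : ContinuousOn F S) (hDS : D ⊆ S)
    (hSD : S ⊆ closure D) (hv : EqOn v F D) : EqOn (limExtension D v) F S := by
  intro x hx
  by_cases hxD : x ∈ D
  · simp only [limExtension, if_pos hxD, hv hxD]
  · have : (𝓝[D] x).NeBot := mem_closure_iff_nhdsWithin_neBot.1 (hSD hx)
    have hlim : Tendsto v (𝓝[D] x) (𝓝 (F x)) :=
      ((hF x hx).mono hDS).congr' (eventuallyEq_nhdsWithin_of_eqOn hv).symm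
    simp only [limExtension, if_neg hxD, hlim.limUnder_eq]

end LimExtension

/-- `p.1` enumerates a countable set `D` and `p.2` lists the values to be extended from `D`. -/
noncomputable def canonicalExtension (p : (ℕ → ℝ) × (ℕ → ℝ)) : ℝ → ℝ :=
  limExtension (range p.1) (Function.extend p.1 p.2 0)

theorem exists_canonicalExtension_eqOn {F : ℝ → ℝ} {S : Set ℝ} (hF : ContinuousOn F S) :
    ∃ p, EqOn (canonicalExtension p) F S := by
  obtain ⟨D, hDS, hDc, hSD⟩ :=
    (TopologicalSpace.IsSeparable.of_separableSpace S).exists_countable_dense_subset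
  rcases D.eq_empty_or_nonempty with rfl | hD
  · exact ⟨0, fun x hx => by simpa using hSD hx⟩
  obtain ⟨u, rfl⟩ := hDc.exists_eq_range hD
  refine ⟨(u, F ∘ u), limExtension_eqOn hF hDS hSD ?_⟩
  rintro _ ⟨n, rfl⟩
  exact Function.FactorsThrough.extend_apply (fun _ _ h => congrArg F h) _ n

theorem isSierpinskiZygmund_of_forall_mk_lt {f : ℝ → ℝ}
    (h : ∀ p, #{x | f x = canonicalExtension p x} < 𝔠) : IsSierpinskiZygmund f := by
  intro S hS hf
  obtain ⟨p, hp⟩ := exists_canonicalExtension_eqOn hf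
  exact (h p).not_ge (hS ▸ mk_le_mk_of_subset fun x hx => (hp hx).symm)

theorem Continuous.not_isSierpinskiZygmund {f : ℝ → ℝ} (hf : Continuous f) :
    ¬ IsSierpinskiZygmund f :=
  fun h => h univ (by simp [mk_real]) hf.continuousOn

theorem IsSierpinskiZygmund.smul {f : ℝ → ℝ} (hf : IsSierpinskiZygmund f) {a : ℝ} (ha : a ≠ 0) :
    IsSierpinskiZygmund (a • f) := by
  intro S hS hcont
  refine hf S hS ?_
  simpa [smul_smul, inv_mul_cancel₀ ha] using hcont.const_smul a⁻¹

theorem mk_span_le {M : Type*} [AddCommGroup M] [Module ℝ M] (s : Set M) :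
    #(span ℝ s) ≤ max #s 𝔠 := by
  rw [Finsupp.span_eq_range_linearCombination]
  refine mk_range_le.trans ?_
  rcases isEmpty_or_nonempty s with hs | hs
  · simpa using one_le_aleph0.trans aleph0_le_continuum
  · simp [mk_real]

theorem aleph0_le_dContinuum : ℵ₀ ≤ dContinuum :=
  aleph0_le_continuum.trans continuum_lt_dContinuum.le

/-- If `φ` agrees with each member on fewer than `𝔠` points, so does every `w + c • φ` with
`w ∈ span ℝ s`, `c ≠ 0`, with each canonical extension. -/
noncomputable def avoidSet (s : Set (ℝ → ℝ)) : Set (ℝ → ℝ) :=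
  range fun t : ((ℕ → ℝ) × (ℕ → ℝ)) × ℝ × span ℝ s => t.2.1 • (canonicalExtension t.1 - t.2.2)

theorem mk_avoidSet_lt {s : Set (ℝ → ℝ)} (hs : #s < dContinuum) : #(avoidSet s) < dContinuum := by
  have hspan : #(span ℝ s) < dContinuum :=
    (mk_span_le s).trans_lt (max_lt hs continuum_lt_dContinuum)
  have hparam : #((ℕ → ℝ) × (ℕ → ℝ)) < dContinuum := by
    simpa [mk_real] using continuum_lt_dContinuum
  refine mk_range_le.trans_lt ?_
  simp only [mk_prod, lift_id]
  exact mul_lt_of_lt aleph0_le_dContinuum hparam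
    (mul_lt_of_lt aleph0_le_dContinuum (mk_real ▸ continuum_lt_dContinuum) hspan)

noncomputable def avoiding (H : Set (ℝ → ℝ)) : ℝ → ℝ :=
  Classical.epsilon fun φ => ∀ h ∈ H, #{x | h x = φ x} < 𝔠

theorem mk_setOf_eq_avoiding_lt {H : Set (ℝ → ℝ)} (hH : #H < dContinuum) :
    ∀ h ∈ H, #{x | h x = avoiding H x} < 𝔠 :=
  Classical.epsilon_spec (exists_forall_mk_setOf_eq_lt_continuum hH)

noncomputable def szFamily (f₀ : ℝ → ℝ) : dContinuum.ord.ToType → ℝ → ℝ :=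
  WellFoundedLT.fix fun i prev =>
    avoiding (avoidSet (insert f₀ (range fun j : Iio i => prev j j.2)))

theorem szFamily_eq (f₀ : ℝ → ℝ) (i : dContinuum.ord.ToType) :
    szFamily f₀ i = avoiding (avoidSet (insert f₀ (szFamily f₀ '' Iio i))) := by
  rw [szFamily, WellFoundedLT.fix_eq, image_eq_range]

theorem mk_setOf_add_smul_szFamily_eq_lt {f₀ w : ℝ → ℝ} {i : dContinuum.ord.ToType}
    (hw : w ∈ span ℝ (insert f₀ (szFamily f₀ '' Iio i))) {c : ℝ} (hc : c ≠ 0)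
    (p : (ℕ → ℝ) × (ℕ → ℝ)) :
    #{x | (w + c • szFamily f₀ i) x = canonicalExtension p x} < 𝔠 := by
  have hs : #(insert f₀ (szFamily f₀ '' Iio i) : Set (ℝ → ℝ)) < dContinuum :=
    mk_insert_le.trans_lt <| add_lt_of_lt aleph0_le_dContinuum
      (mk_image_le.trans_lt (by simpa using mk_Iio_lt i))
      (one_lt_aleph0.trans_le aleph0_le_dContinuum)
  rw [szFamily_eq]
  convert mk_setOf_eq_avoiding_lt (mk_avoidSet_lt hs) _ ⟨(p, c⁻¹, ⟨w, hw⟩), rfl⟩ using 3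
  ext x
  simp only [mem_ofPred_eq, Pi.add_apply, Pi.smul_apply, Pi.sub_apply, smul_eq_mul]
  rw [inv_mul_eq_iff_eq_mul₀ hc, sub_eq_iff_eq_add', eq_comm]

theorem isSierpinskiZygmund_smul_add_linearCombination (f₀ : ℝ → ℝ) (a : ℝ)
    {c : dContinuum.ord.ToType →₀ ℝ} (hc : c ≠ 0) :
    IsSierpinskiZygmund (a • f₀ + Finsupp.linearCombination ℝ (szFamily f₀) c) := by
  refine isSierpinskiZygmund_of_forall_mk_lt fun p => ?_
  set β := c.support.max' (Finsupp.support_nonempty_iff.2 hc)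
  have hβ : c β ≠ 0 := Finsupp.mem_support_iff.1 (c.support.max'_mem _)
  have hw : a • f₀ + Finsupp.linearCombination ℝ (szFamily f₀) (c.erase β) ∈
      span ℝ (insert f₀ (szFamily f₀ '' Iio β)) := by
    refine add_mem (smul_mem _ _ (subset_span (mem_insert _ _))) ?_
    refine span_mono (subset_insert _ _) ((Finsupp.mem_span_image_iff_linearCombination ℝ).2
      ⟨c.erase β, fun γ hγ => ?_, rfl⟩)
    rw [Finsupp.support_erase] at hγ
    exact lt_of_le_of_ne (c.support.le_max' _ (Finset.mem_of_mem_erase hγ))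
      (Finset.ne_of_mem_erase hγ)
  have := mk_setOf_add_smul_szFamily_eq_lt hw hβ p
  rwa [add_assoc, ← Finsupp.linearCombination_single, ← map_add, Finsupp.erase_add_single] at this

theorem linearIndependent_szFamily (f₀ : ℝ → ℝ) : LinearIndependent ℝ (szFamily f₀) := by
  refine linearIndependent_iff.2 fun c hc => by_contra fun hc₀ => ?_
  have := isSierpinskiZygmund_smul_add_linearCombination f₀ 0 hc₀
  rw [hc, zero_smul, add_zero] at this
  exact continuous_const.not_isSierpinskiZygmund this

theorem mem_span_singleton_or_isSierpinskiZygmund {f₀ y : ℝ → ℝ}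
    (hy : y ∈ span ℝ (insert f₀ (range (szFamily f₀)))) :
    y ∈ span ℝ {f₀} ∨ IsSierpinskiZygmund y := by
  obtain ⟨a, z, hz, rfl⟩ := mem_span_insert.1 hy
  rw [← Finsupp.range_linearCombination] at hz
  obtain ⟨c, rfl⟩ := hz
  rcases eq_or_ne c 0 with rfl | hc
  · simpa using Or.inl (smul_mem _ a (mem_span_singleton_self f₀))
  · exact Or.inr (isSierpinskiZygmund_smul_add_linearCombination f₀ a hc)

instance : Infinite dContinuum.ord.ToType :=
  infinite_iff.2 ((mk_ord_toType _).symm ▸ aleph0_le_dContinuum)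

theorem rank_span_szFamily_image (f₀ : ℝ → ℝ) (s : Set dContinuum.ord.ToType) :
    Module.rank ℝ (span ℝ (szFamily f₀ '' s)) = #s := by
  have hli := (linearIndependent_szFamily f₀).comp (Subtype.val : s → _) Subtype.val_injective
  rw [image_eq_range]
  exact (rank_span hli).trans (mk_range_eq _ hli.injective)

theorem injective_span_szFamily_image_compl (f₀ : ℝ → ℝ) :
    Function.Injective fun α : dContinuum.ord.ToType => span ℝ (szFamily f₀ '' {α}ᶜ) := by
  intro α β (h : span ℝ _ = span ℝ _)
  by_contra hne
  have hα : szFamily f₀ α ∈ span ℝ (szFamily f₀ '' {β}ᶜ) := subset_span ⟨α, hne, rfl⟩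
  exact (linearIndependent_szFamily f₀).notMem_span_image (s := {α}ᶜ) (by simp) (h ▸ hα)

theorem dContinuum_le_rank_span_szFamily_image_compl (f₀ : ℝ → ℝ) (α : dContinuum.ord.ToType) :
    dContinuum ≤ Module.rank ℝ (span ℝ (szFamily f₀ '' {α}ᶜ)) := by
  have hα : #({α} : Set dContinuum.ord.ToType) < #dContinuum.ord.ToType := by
    simpa using one_lt_aleph0.trans_le aleph0_le_dContinuum
  rw [rank_span_szFamily_image, mk_compl_of_infinite _ hα, mk_ord_toType]

theorem span_szFamily_image_compl_le (f₀ : ℝ → ℝ) (α : dContinuum.ord.ToType) :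
    span ℝ (szFamily f₀ '' {α}ᶜ) ≤ span ℝ (insert f₀ (range (szFamily f₀))) :=
  span_mono ((image_subset_range _ _).trans (subset_insert _ _))

theorem coe_span_insert_szFamily_subset {f₀ : ℝ → ℝ} (hf₀ : f₀ = 0 ∨ IsSierpinskiZygmund f₀) :
    (span ℝ (insert f₀ (range (szFamily f₀))) : Set (ℝ → ℝ)) ⊆
      {f | IsSierpinskiZygmund f} ∪ {0} := by
  intro y hy
  rcases mem_span_singleton_or_isSierpinskiZygmund hy with hy | hy
  · obtain ⟨a, rfl⟩ := mem_span_singleton.1 hy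
    rcases hf₀ with rfl | hf₀
    · simp
    rcases eq_or_ne a 0 with rfl | ha
    · simp
    · exact Or.inl (hf₀.smul ha)
  · exact Or.inl hy

/-- **Corollary.** The family `SZ(ℝ)` of Sierpiński–Zygmund functions has property
`B(d_𝔠, d_𝔠)`: `SZ(ℝ) ∪ {0}` is the union of at least `d_𝔠` many linear subspaces of
`ℝ^ℝ`, each contained in `SZ(ℝ) ∪ {0}` and each of dimension at least `d_𝔠`. -/
theorem sierpinskiZygmund_property_B :
    ∃ 𝓑 : Set (Submodule ℝ (ℝ → ℝ)),
      dContinuum ≤ #𝓑 ∧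
      (∀ B ∈ 𝓑, (B : Set (ℝ → ℝ)) ⊆ {f | IsSierpinskiZygmund f} ∪ {0} ∧
        dContinuum ≤ Module.rank ℝ B) ∧
      {f | IsSierpinskiZygmund f} ∪ {0} = ⋃ B ∈ 𝓑, (B : Set (ℝ → ℝ)) := by
  set W := fun α : dContinuum.ord.ToType => span ℝ (szFamily 0 '' {α}ᶜ)
  set V := fun f : ℝ → ℝ => span ℝ (insert f (range (szFamily f)))
  have hB : ∀ B ∈ range W ∪ V '' {f | IsSierpinskiZygmund f},
      (B : Set (ℝ → ℝ)) ⊆ {f | IsSierpinskiZygmund f} ∪ {0} ∧ dContinuum ≤ Module.rank ℝ B := by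
    rintro _ (⟨α, rfl⟩ | ⟨f, hf, rfl⟩)
    · exact ⟨(SetLike.coe_subset_coe.2 (span_szFamily_image_compl_le 0 α)).trans
          (coe_span_insert_szFamily_subset (.inl rfl)),
        dContinuum_le_rank_span_szFamily_image_compl 0 α⟩
    · obtain ⟨α⟩ : Nonempty dContinuum.ord.ToType := inferInstance
      exact ⟨coe_span_insert_szFamily_subset (.inr hf),
        (dContinuum_le_rank_span_szFamily_image_compl f α).trans
          (rank_mono (span_szFamily_image_compl_le f α))⟩
  refine ⟨range W ∪ V '' {f | IsSierpinskiZygmund f}, ?_, hB, ?_⟩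
  · calc dContinuum = #(range W) := by
          rw [mk_range_eq _ (injective_span_szFamily_image_compl 0), mk_ord_toType]
      _ ≤ _ := mk_le_mk_of_subset subset_union_left
  · refine (iUnion₂_subset fun B hB' => (hB B hB').1).antisymm' ?_
    rintro f (hf | rfl)
    · exact mem_biUnion (mem_union_right _ (mem_image_of_mem V hf)) (subset_span (mem_insert _ _))
    · obtain ⟨α⟩ : Nonempty dContinuum.ord.ToType := inferInstance
      exact mem_biUnion (mem_union_left _ (mem_range_self α)) (zero_mem _)
end

section
/- The family PC(ℝ) of peripherally continuous functions has property B(2^𝔠, 𝔠): there exists a set 𝓑 of ℝ-linear subspaces of ℝ^ℝ with #𝓑 ≥ 𝔠 such that every B ∈ 𝓑 satisfies B ⊆ PC(ℝ) ∪ {0} and dim_ℝ B ≥ 2^𝔠, and PC(ℝ) ∪ {0} = ⋃ 𝓑. -/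
open Cardinal

/-- `f` is peripherally continuous: for every `x` and open sets `U ∋ x`, `V ∋ f x` there
is an open neighborhood `W` of `x` with `W ⊆ U` and `f(frontier W) ⊆ V`. -/
def IsPeripherallyContinuous (f : ℝ → ℝ) : Prop :=
  ∀ x : ℝ, ∀ U V : Set ℝ, IsOpen U → IsOpen V → x ∈ U → f x ∈ V →
    ∃ W : Set ℝ, IsOpen W ∧ x ∈ W ∧ W ⊆ U ∧ f '' frontier W ⊆ V

/-!
Peripheral continuity on ℝ amounts to this: every `x` is a limit, from the left and from the
right, of points `y` with `f y` close to `f x` (`TwoSidedApprox ⊤ f`). If these points can always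
be taken in the class of `x` for an equivalence relation `r`, the same holds for every
`c • f + φ ∘ Quotient.mk r`, so `ℝ ∙ f ⊔ classFunctions r` consists of peripherally continuous
functions, and its dimension is at least `𝔠 ^ #(Quotient r)`.

Such an `r` with `𝔠` classes exists for every peripherally continuous `f`. Covering the graph of
`f` by countably many small boxes shows that, outside fewer than `𝔠` points, each of the countably
many one-sided approximation sets of a point has `𝔠` elements. A transfinite recursion of length
`𝔠` then splits ℝ into one class of size `< 𝔠` containing the exceptional points and countable
classes, each closed under witnesses chosen outside all earlier classes. The functions
`(x - t) ^ 2` with the cosets of ℚ give `𝔠` distinct subspaces of this kind.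
-/

open Set Metric

universe u v

lemma mk_iUnion_lt_continuum {ι α : Type u} [Countable ι] {t : ι → Set α}
    (ht : ∀ i, #(t i) < 𝔠) : #(⋃ i, t i) < 𝔠 :=
  calc #(⋃ i, t i) ≤ sum fun i => #(t i) := mk_iUnion_le_sum_mk
    _ < prod fun _ : ι => 𝔠 := sum_lt_prod _ _ ht
    _ = 𝔠 ^ #ι := prod_const' ι 𝔠
    _ ≤ 𝔠 ^ ℵ₀ := power_le_power_left continuum_ne_zero mk_le_aleph0
    _ = 𝔠 := continuum_power_aleph0

lemma mk_biUnion_lt_continuum {β α : Type u} {s : Set β} (hs : #s < 𝔠) {t : β → Set α}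
    (ht : ∀ b ∈ s, (t b).Countable) : #(⋃ b ∈ s, t b) < 𝔠 :=
  calc #(⋃ b ∈ s, t b) ≤ #s * ⨆ b : s, #(t b) := mk_biUnion_le t s
    _ ≤ #s * ℵ₀ := by gcongr; exact ciSup_le' fun b => (ht b b.2).le_aleph0
    _ < 𝔠 := mul_lt_of_lt aleph0_le_continuum hs aleph0_lt_continuum

section IterClosure

variable {α : Type u} {ι : Type v} (w : α → ι → α)

def iterClosure (S : Set α) : Set α :=
  {y | ∃ x ∈ S, ∃ l : List ι, l.foldl w x = y}

lemma subset_iterClosure (S : Set α) : S ⊆ iterClosure w S :=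
  fun x hx => ⟨x, hx, [], rfl⟩

lemma iterClosure_eq_biUnion (S : Set α) :
    iterClosure w S = ⋃ x ∈ S, range fun l : List ι => l.foldl w x := by
  ext y
  simp [iterClosure]

variable {w}

lemma apply_mem_iterClosure {S : Set α} {y : α} (hy : y ∈ iterClosure w S) (t : ι) :
    w y t ∈ iterClosure w S := by
  obtain ⟨x, hx, l, rfl⟩ := hy
  exact ⟨x, hx, l ++ [t], by simp⟩

lemma iterClosure_subset {S T : Set α} (hST : S ⊆ T) (hT : ∀ y ∈ T, ∀ t, w y t ∈ T) :
    iterClosure w S ⊆ T := by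
  have key : ∀ l : List ι, ∀ x ∈ T, l.foldl w x ∈ T := by
    intro l
    induction l with
    | nil => exact fun x hx => hx
    | cons t l ih => exact fun x hx => ih _ (hT x hx t)
  rintro _ ⟨x, hx, l, rfl⟩
  exact key l x (hST hx)

variable [Countable ι]

lemma countable_iterClosure {S : Set α} (hS : S.Countable) : (iterClosure w S).Countable := by
  rw [iterClosure_eq_biUnion]
  exact hS.biUnion fun _ _ => countable_range _

lemma mk_iterClosure_lt {S : Set α} (hS : #S < 𝔠) : #(iterClosure w S) < 𝔠 := by
  rw [iterClosure_eq_biUnion]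
  exact mk_biUnion_lt_continuum hS fun _ _ => countable_range _

end IterClosure

section Refinement

variable {α : Type u} {ι : Type v} (P : α → ι → Set α)

def thinPoints : Set α := {x | ∃ t, #(P x t) < 𝔠}

open Classical in
noncomputable def pick (S : Set α) (x : α) (t : ι) : α :=
  if h : (P x t \ S).Nonempty then h.some else x

def core : Set α := iterClosure (pick P ∅) (thinPoints P)

variable {P}

lemma pick_mem {S : Set α} {x : α} {t : ι} (h : (P x t \ S).Nonempty) :
    pick P S x t ∈ P x t \ S := by
  rw [pick, dif_pos h]
  exact h.some_mem

lemma pick_mem_of_notMem_thinPoints {S : Set α} {x : α} (hx : x ∉ thinPoints P) (hS : #S < 𝔠)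
    (t : ι) : pick P S x t ∈ P x t \ S :=
  pick_mem <| sdiff_nonempty.2 fun hsub => hx ⟨t, (mk_le_mk_of_subset hsub).trans_lt hS⟩

lemma pick_mem_core (hne : ∀ x t, (P x t).Nonempty) {x : α} (hx : x ∈ core P) (t : ι) :
    pick P ∅ x t ∈ core P ∩ P x t :=
  ⟨apply_mem_iterClosure hx t, (pick_mem (by simpa using hne x t)).1⟩

lemma mk_core_lt [Countable ι] (hthin : #(thinPoints P) < 𝔠) : #(core P) < 𝔠 :=
  mk_iterClosure_lt hthin

variable {J : Type u} [LinearOrder J] [WellFoundedLT J]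

variable (P) in
open Classical in
def block (e : J ≃ α) : J → Set α :=
  WellFoundedLT.fix fun i rec =>
    let used := core P ∪ ⋃ j, ⋃ h : j < i, rec j h
    if e i ∈ used then ∅ else iterClosure (pick P used) {e i}

variable (P) in
def usedBefore (e : J ≃ α) (i : J) : Set α := core P ∪ ⋃ j < i, block P e j

variable {e : J ≃ α}

open Classical in
lemma block_eq (i : J) : block P e i =
    if e i ∈ usedBefore P e i then ∅ else iterClosure (pick P (usedBefore P e i)) {e i} := by
  rw [block, WellFoundedLT.fix_eq]
  dsimp only
  congr

lemma countable_block [Countable ι] (i : J) : (block P e i).Countable := by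
  rw [block_eq]
  split_ifs
  · exact countable_empty
  · exact countable_iterClosure (countable_singleton _)

lemma thinPoints_subset_usedBefore (i : J) : thinPoints P ⊆ usedBefore P e i :=
  (subset_iterClosure _ _).trans subset_union_left

lemma block_subset_usedBefore {i j : J} (h : j < i) : block P e j ⊆ usedBefore P e i :=
  fun _ hy => Or.inr (mem_iUnion₂.2 ⟨j, h, hy⟩)

lemma mk_usedBefore_lt [Countable ι] (hthin : #(thinPoints P) < 𝔠)
    (hJ : ∀ i : J, #(Iio i) < 𝔠) (i : J) : #(usedBefore P e i) < 𝔠 :=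
  (mk_union_le _ _).trans_lt <| add_lt_of_lt aleph0_le_continuum (mk_core_lt hthin)
    (mk_biUnion_lt_continuum (hJ i) fun j _ => countable_block j)

lemma disjoint_block_usedBefore [Countable ι] (hthin : #(thinPoints P) < 𝔠)
    (hJ : ∀ i : J, #(Iio i) < 𝔠) (i : J) : Disjoint (block P e i) (usedBefore P e i) := by
  rw [block_eq]
  split_ifs with h
  · exact empty_disjoint _
  · refine subset_compl_iff_disjoint_right.1
      (iterClosure_subset (singleton_subset_iff.2 h) fun y hy t => ?_)
    exact (pick_mem_of_notMem_thinPoints (fun hy' => hy (thinPoints_subset_usedBefore i hy'))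
      (mk_usedBefore_lt hthin hJ i) t).2

lemma disjoint_core_block [Countable ι] (hthin : #(thinPoints P) < 𝔠)
    (hJ : ∀ i : J, #(Iio i) < 𝔠) (i : J) : Disjoint (core P) (block P e i) :=
  ((disjoint_block_usedBefore hthin hJ i).mono_right subset_union_left).symm

lemma disjoint_block [Countable ι] (hthin : #(thinPoints P) < 𝔠)
    (hJ : ∀ i : J, #(Iio i) < 𝔠) {i j : J} (hij : i ≠ j) :
    Disjoint (block P e i) (block P e j) := by
  rcases hij.lt_or_gt with h | h
  · exact ((disjoint_block_usedBefore hthin hJ j).mono_right (block_subset_usedBefore h)).symm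
  · exact (disjoint_block_usedBefore hthin hJ i).mono_right (block_subset_usedBefore h)

variable (P e) in
lemma mem_core_or_mem_block (x : α) : x ∈ core P ∨ ∃ i, x ∈ block P e i := by
  by_cases hx : x ∈ usedBefore P e (e.symm x)
  · rcases hx with hx | hx
    · exact Or.inl hx
    · obtain ⟨j, -, hj⟩ := mem_iUnion₂.1 hx
      exact Or.inr ⟨j, hj⟩
  · refine Or.inr ⟨e.symm x, ?_⟩
    rw [block_eq, e.apply_symm_apply, if_neg hx]
    exact subset_iterClosure _ _ rfl

lemma pick_mem_block [Countable ι] (hthin : #(thinPoints P) < 𝔠)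
    (hJ : ∀ i : J, #(Iio i) < 𝔠) {i : J} {x : α} (hx : x ∈ block P e i) (t : ι) :
    pick P (usedBefore P e i) x t ∈ block P e i ∩ P x t := by
  have hxthin : x ∉ thinPoints P := fun h =>
    (disjoint_block_usedBefore hthin hJ i).notMem_of_mem_left hx (thinPoints_subset_usedBefore i h)
  refine ⟨?_, (pick_mem_of_notMem_thinPoints hxthin (mk_usedBefore_lt hthin hJ i) t).1⟩
  rw [block_eq] at hx ⊢
  split_ifs at hx ⊢
  · exact hx
  · exact apply_mem_iterClosure hx t

variable (P e) in
open Classical in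
noncomputable def blockIndex (x : α) : Option J :=
  if h : ∃ i, x ∈ block P e i then some h.choose else none

lemma blockIndex_of_mem_block [Countable ι] (hthin : #(thinPoints P) < 𝔠)
    (hJ : ∀ i : J, #(Iio i) < 𝔠) {x : α} {i : J} (hx : x ∈ block P e i) :
    blockIndex P e x = some i := by
  have h : ∃ i, x ∈ block P e i := ⟨i, hx⟩
  rw [blockIndex, dif_pos h, Option.some_inj]
  by_contra hne
  exact (disjoint_block hthin hJ hne).notMem_of_mem_left h.choose_spec hx

lemma blockIndex_of_mem_core [Countable ι] (hthin : #(thinPoints P) < 𝔠)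
    (hJ : ∀ i : J, #(Iio i) < 𝔠) {x : α} (hx : x ∈ core P) : blockIndex P e x = none := by
  rw [blockIndex, dif_neg]
  rintro ⟨i, hi⟩
  exact (disjoint_core_block hthin hJ i).notMem_of_mem_left hx hi

lemma exists_mem_blockIndex_eq [Countable ι] (hne : ∀ x t, (P x t).Nonempty)
    (hthin : #(thinPoints P) < 𝔠) (hJ : ∀ i : J, #(Iio i) < 𝔠) (x : α) (t : ι) :
    ∃ y ∈ P x t, blockIndex P e y = blockIndex P e x := by
  rcases mem_core_or_mem_block P e x with hx | ⟨i, hx⟩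
  · obtain ⟨hy, hyP⟩ := pick_mem_core hne hx t
    exact ⟨_, hyP, by rw [blockIndex_of_mem_core hthin hJ hy, blockIndex_of_mem_core hthin hJ hx]⟩
  · obtain ⟨hy, hyP⟩ := pick_mem_block hthin hJ hx t
    exact ⟨_, hyP,
      by rw [blockIndex_of_mem_block hthin hJ hy, blockIndex_of_mem_block hthin hJ hx]⟩

lemma continuum_le_mk_range_blockIndex [Countable ι] (hα : #α = 𝔠)
    (hthin : #(thinPoints P) < 𝔠) (hJ : ∀ i : J, #(Iio i) < 𝔠) :
    𝔠 ≤ #(range (blockIndex P e)) := by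
  by_contra! h
  have hA : #(some ⁻¹' range (blockIndex P e)) < 𝔠 :=
    (mk_preimage_of_injective _ _ (Option.some_injective J)).trans_lt h
  have hcover :
      (Set.univ : Set α) ⊆ core P ∪ ⋃ i ∈ some ⁻¹' range (blockIndex P e), block P e i := by
    intro x _
    rcases mem_core_or_mem_block P e x with hx | ⟨i, hx⟩
    · exact Or.inl hx
    · exact Or.inr (mem_biUnion ⟨x, blockIndex_of_mem_block hthin hJ hx⟩ hx)
  have := (mk_le_mk_of_subset hcover).trans_lt <| (mk_union_le _ _).trans_lt <|
    add_lt_of_lt aleph0_le_continuum (mk_core_lt hthin)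
      (mk_biUnion_lt_continuum hA fun i _ => countable_block i)
  rw [mk_univ, hα] at this
  exact this.false

theorem exists_setoid_forall_exists_rel [Countable ι] (hα : #α = 𝔠)
    (hne : ∀ x t, (P x t).Nonempty) (hthin : #(thinPoints P) < 𝔠) :
    ∃ r : Setoid α, 𝔠 ≤ #(Quotient r) ∧ ∀ x t, ∃ y ∈ P x t, r y x := by
  obtain ⟨e⟩ : Nonempty ((𝔠 : Cardinal.{u}).ord.ToType ≃ α) :=
    Cardinal.eq.1 (by rw [mk_ord_toType, hα])
  have hJ (i : (𝔠 : Cardinal.{u}).ord.ToType) : #(Iio i) < 𝔠 := by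
    simpa using mk_Iio_lt i (by simp)
  refine ⟨Setoid.ker (blockIndex P e), ?_, exists_mem_blockIndex_eq hne hthin hJ⟩
  rw [mk_congr (Setoid.quotientKerEquivRange _)]
  exact continuum_le_mk_range_blockIndex hα hthin hJ

end Refinement

lemma mk_lt_continuum_of_forall_mk_inter_Ioi_lt {α : Type u} [LinearOrder α] [TopologicalSpace α]
    [OrderClosedTopology α] [SecondCountableTopology α] {A : Set α}
    (h : ∀ z ∈ A, #(A ∩ Ioi z : Set α) < 𝔠) : #A < 𝔠 := by
  obtain ⟨D, hDc, hD⟩ := TopologicalSpace.exists_countable_dense A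
  have : Countable D := hDc.to_subtype
  have hcover : A ⊆ (A ∩ lowerBounds A) ∪ ⋃ d : D, A ∩ Ioi ((d : A) : α) := by
    intro z hz
    by_cases hlow : z ∈ lowerBounds A
    · exact Or.inl ⟨hz, hlow⟩
    · simp only [mem_lowerBounds, not_forall, not_le] at hlow
      obtain ⟨a, ha, haz⟩ := hlow
      obtain ⟨d, hdD, hdz⟩ := hD.exists_mem_open
        (isOpen_lt continuous_subtype_val continuous_const)
        (⟨⟨a, ha⟩, haz⟩ : {b : A | (b : α) < z}.Nonempty)
      exact Or.inr (mem_iUnion.2 ⟨⟨d, hdD⟩, hz, hdz⟩)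
  have hlow : #(A ∩ lowerBounds A : Set α) < 𝔠 :=
    (mk_le_one_iff_set_subsingleton.2 fun x hx y hy => le_antisymm (hx.2 hy.1) (hy.2 hx.1)).trans_lt
      (one_lt_aleph0.trans aleph0_lt_continuum)
  exact (mk_le_mk_of_subset hcover).trans_lt <| (mk_union_le _ _).trans_lt <|
    add_lt_of_lt aleph0_le_continuum hlow (mk_iUnion_lt_continuum fun d => h _ (d : A).2)

lemma mk_lt_continuum_of_forall_mk_inter_Iio_lt {α : Type u} [LinearOrder α] [TopologicalSpace α]
    [OrderClosedTopology α] [SecondCountableTopology α] {A : Set α}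
    (h : ∀ z ∈ A, #(A ∩ Iio z : Set α) < 𝔠) : #A < 𝔠 :=
  mk_lt_continuum_of_forall_mk_inter_Ioi_lt (α := αᵒᵈ) h

lemma exists_map_intProd_abs_sub_lt (k : ℝ → ℝ) {ρ : ℝ} (hρ : 0 < ρ) :
    ∃ box : ℝ → ℤ × ℤ, ∀ y z, box y = box z → |y - z| < ρ ∧ |k y - k z| < ρ := by
  have key : ∀ a b : ℝ, ⌊a / ρ⌋ = ⌊b / ρ⌋ → |a - b| < ρ := fun a b h => by
    have := Int.abs_sub_lt_one_of_floor_eq_floor h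
    rwa [← sub_div, abs_div, abs_of_pos hρ, div_lt_one hρ] at this
  exact ⟨fun x => (⌊x / ρ⌋, ⌊k x / ρ⌋),
    fun y z h => ⟨key _ _ (congrArg Prod.fst h), key _ _ (congrArg Prod.snd h)⟩⟩

def sidePool (k : ℝ → ℝ) (x : ℝ) : Bool × ℕ → Set ℝ
  | (true, n) => {y ∈ Ioo x (x + 1 / (n + 1)) | |k y - k x| < 1 / (n + 1)}
  | (false, n) => {y ∈ Ioo (x - 1 / (n + 1)) x | |k y - k x| < 1 / (n + 1)}

lemma mk_setOf_mk_sidePool_lt (k : ℝ → ℝ) (t : Bool × ℕ) :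
    #{x | #(sidePool k x t) < 𝔠} < 𝔠 := by
  obtain ⟨box, hbox⟩ := exists_map_intProd_abs_sub_lt k (ρ := 1 / (t.2 + 1)) Nat.one_div_pos_of_nat
  have hsplit : {x | #(sidePool k x t) < 𝔠} = ⋃ p, {x | #(sidePool k x t) < 𝔠} ∩ box ⁻¹' {p} := by
    ext x
    simp
  rw [hsplit]
  -- inside one box, the points on the `t.1` side of `z` all lie in the pool of `z`
  refine mk_iUnion_lt_continuum fun p => ?_
  obtain ⟨_ | _, n⟩ := t
  · refine mk_lt_continuum_of_forall_mk_inter_Iio_lt fun z hz =>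
      (mk_le_mk_of_subset ?_).trans_lt hz.1
    rintro y ⟨hy, hyz : y < z⟩
    obtain ⟨h1, h2⟩ := hbox y z (hy.2.trans hz.2.symm)
    exact ⟨⟨by linarith [(abs_lt.1 h1).1], hyz⟩, h2⟩
  · refine mk_lt_continuum_of_forall_mk_inter_Ioi_lt fun z hz =>
      (mk_le_mk_of_subset ?_).trans_lt hz.1
    rintro y ⟨hy, hzy : z < y⟩
    obtain ⟨h1, h2⟩ := hbox y z (hy.2.trans hz.2.symm)
    exact ⟨⟨hzy, by linarith [(abs_lt.1 h1).2]⟩, h2⟩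

lemma mk_thinPoints_sidePool_lt (k : ℝ → ℝ) : #(thinPoints (sidePool k)) < 𝔠 := by
  have : thinPoints (sidePool k) = ⋃ t, {x | #(sidePool k x t) < 𝔠} := by
    ext
    simp [thinPoints]
  rw [this]
  exact mk_iUnion_lt_continuum (mk_setOf_mk_sidePool_lt k)

def TwoSidedApprox (r : Setoid ℝ) (k : ℝ → ℝ) : Prop :=
  ∀ x, ∀ ε > 0, ∀ δ > 0,
    (∃ a ∈ Ioo (x - δ) x, r a x ∧ |k a - k x| < ε) ∧ (∃ b ∈ Ioo x (x + δ), r b x ∧ |k b - k x| < ε)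

lemma IsPreconnected.exists_mem_frontier {X : Type*} [TopologicalSpace X] {s W : Set X}
    (hs : IsPreconnected s) (hW : IsOpen W) (hsW : (s ∩ W).Nonempty) (hsW' : ¬ s ⊆ W) :
    ∃ y ∈ s, y ∈ frontier W := by
  by_contra! h
  refine hsW' (hs.subset_of_closure_inter_subset hW hsW fun y ⟨hyc, hys⟩ => ?_)
  by_contra hyW
  exact h y hys ⟨hyc, by rwa [hW.interior_eq]⟩

lemma IsPeripherallyContinuous.twoSidedApprox_top {f : ℝ → ℝ} (hf : IsPeripherallyContinuous f) :
    TwoSidedApprox ⊤ f := by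
  intro x ε hε δ hδ
  obtain ⟨W, hWo, hxW, hWU, hWV⟩ := hf x (Ioo (x - δ / 2) (x + δ / 2)) (ball (f x) ε) isOpen_Ioo
    isOpen_ball ⟨by linarith, by linarith⟩ (mem_ball_self hε)
  have hfr : ∀ y ∈ frontier W, y ≠ x ∧ |f y - f x| < ε := fun y hy =>
    ⟨fun h => hy.2 (by rwa [hWo.interior_eq, h]),
      by simpa [Real.dist_eq] using hWV (mem_image_of_mem f hy)⟩
  obtain ⟨a, ha, hafr⟩ := isPreconnected_Icc.exists_mem_frontier hWo
    ⟨x, ⟨by linarith, le_rfl⟩, hxW⟩ fun h => lt_irrefl _ (hWU (h ⟨le_rfl, by linarith⟩)).1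
  obtain ⟨b, hb, hbfr⟩ := isPreconnected_Icc.exists_mem_frontier hWo
    ⟨x, ⟨le_rfl, by linarith⟩, hxW⟩ fun h => lt_irrefl _ (hWU (h ⟨by linarith, le_rfl⟩)).2
  exact ⟨⟨a, ⟨by linarith [ha.1], lt_of_le_of_ne ha.2 (hfr a hafr).1⟩, trivial, (hfr a hafr).2⟩,
    ⟨b, ⟨lt_of_le_of_ne' hb.1 (hfr b hbfr).1, by linarith [hb.2]⟩, trivial, (hfr b hbfr).2⟩⟩

lemma TwoSidedApprox.isPeripherallyContinuous {r : Setoid ℝ} {k : ℝ → ℝ} (h : TwoSidedApprox r k) :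
    IsPeripherallyContinuous k := by
  intro x U V hU hV hxU hxV
  obtain ⟨δ, hδ, hδU⟩ := Metric.isOpen_iff.1 hU x hxU
  obtain ⟨ε, hε, hεV⟩ := Metric.isOpen_iff.1 hV _ hxV
  obtain ⟨⟨a, ha, -, hka⟩, ⟨b, hb, -, hkb⟩⟩ := h x ε hε δ hδ
  refine ⟨Ioo a b, isOpen_Ioo, ⟨ha.2, hb.1⟩, fun y hy => hδU ?_, ?_⟩
  · rw [mem_ball, Real.dist_eq, abs_sub_lt_iff]
    constructor <;> linarith [hy.1, hy.2, ha.1, hb.2]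
  · rw [frontier_Ioo (ha.2.trans hb.1)]
    rintro _ ⟨y, rfl | rfl, rfl⟩
    · exact hεV (by rwa [mem_ball, Real.dist_eq])
    · exact hεV (by rwa [mem_ball, Real.dist_eq])

theorem TwoSidedApprox.exists_refinement {k : ℝ → ℝ} (hk : TwoSidedApprox ⊤ k) :
    ∃ r : Setoid ℝ, 𝔠 ≤ #(Quotient r) ∧ TwoSidedApprox r k := by
  have hne : ∀ x t, (sidePool k x t).Nonempty := by
    rintro x ⟨_ | _, n⟩
    · obtain ⟨⟨a, ha, -, hka⟩, -⟩ := hk x _ Nat.one_div_pos_of_nat _ Nat.one_div_pos_of_nat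
      exact ⟨a, ha, hka⟩
    · obtain ⟨-, ⟨b, hb, -, hkb⟩⟩ := hk x _ Nat.one_div_pos_of_nat _ Nat.one_div_pos_of_nat
      exact ⟨b, hb, hkb⟩
  obtain ⟨r, hr, hwit⟩ := exists_setoid_forall_exists_rel mk_real hne (mk_thinPoints_sidePool_lt k)
  refine ⟨r, hr, fun x ε hε δ hδ => ?_⟩
  obtain ⟨n, hn⟩ := exists_nat_one_div_lt (lt_min hε hδ)
  have hnε := hn.trans_le (min_le_left ε δ)
  have hnδ := hn.trans_le (min_le_right ε δ)
  obtain ⟨a, ⟨ha, hka⟩, hra⟩ := hwit x (false, n)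
  obtain ⟨b, ⟨hb, hkb⟩, hrb⟩ := hwit x (true, n)
  exact ⟨⟨a, ⟨by linarith [ha.1], ha.2⟩, hra, hka.trans hnε⟩,
    ⟨b, ⟨hb.1, by linarith [hb.2]⟩, hrb, hkb.trans hnε⟩⟩

def classFunctions {X : Type u} (r : Setoid X) : Submodule ℝ (X → ℝ) :=
  LinearMap.range (LinearMap.funLeft ℝ ℝ (Quotient.mk r))

lemma two_pow_continuum_le_rank_classFunctions {X : Type u} {r : Setoid X}
    (h : 𝔠 ≤ #(Quotient r)) : 2 ^ 𝔠 ≤ Module.rank ℝ (classFunctions r) := by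
  have : Infinite (Quotient r) := infinite_iff.2 (aleph0_le_continuum.trans h)
  rw [classFunctions, rank_range_of_injective _
    (LinearMap.funLeft_injective_of_surjective ℝ ℝ _ Quotient.mk_surjective), rank_fun_infinite,
    mk_arrow, mk_real, lift_continuum, lift_uzero]
  exact (power_le_power_right (nat_lt_continuum 2).le).trans
    (power_le_power_left continuum_ne_zero h)

lemma TwoSidedApprox.of_mem_sup {r : Setoid ℝ} {k g : ℝ → ℝ} (hk : TwoSidedApprox r k)
    (hg : g ∈ ℝ ∙ k ⊔ classFunctions r) : TwoSidedApprox r g := by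
  obtain ⟨_, hc, _, ⟨φ, rfl⟩, rfl⟩ := Submodule.mem_sup.1 hg
  obtain ⟨c, rfl⟩ := Submodule.mem_span_singleton.1 hc
  intro x ε hε δ hδ
  have hclose : ∀ y, r y x → |k y - k x| < ε / (|c| + 1) →
      |(c • k + LinearMap.funLeft ℝ ℝ (Quotient.mk r) φ) y -
        (c • k + LinearMap.funLeft ℝ ℝ (Quotient.mk r) φ) x| < ε := by
    intro y hyx hy
    simp only [Pi.add_apply, Pi.smul_apply, smul_eq_mul, LinearMap.funLeft_apply,
      Quotient.sound hyx, add_sub_add_right_eq_sub, ← mul_sub, abs_mul]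
    calc |c| * |k y - k x| ≤ (|c| + 1) * |k y - k x| := by gcongr; linarith
      _ < (|c| + 1) * (ε / (|c| + 1)) := by gcongr
      _ = ε := mul_div_cancel₀ _ (by positivity)
  obtain ⟨⟨a, ha, hra, hka⟩, ⟨b, hb, hrb, hkb⟩⟩ := hk x (ε / (|c| + 1)) (by positivity) δ hδ
  exact ⟨⟨a, ha, hra, hclose a hra hka⟩, ⟨b, hb, hrb, hclose b hrb hkb⟩⟩

lemma two_pow_continuum_le_rank_sup {r : Setoid ℝ} (h : 𝔠 ≤ #(Quotient r)) (k : ℝ → ℝ) :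
    2 ^ 𝔠 ≤ Module.rank ℝ ↥(ℝ ∙ k ⊔ classFunctions r) :=
  (two_pow_continuum_le_rank_classFunctions h).trans (Submodule.rank_mono le_sup_right)

noncomputable def ratCosets : Setoid ℝ :=
  QuotientAddGroup.leftRel (Rat.castHom ℝ).toAddMonoidHom.range

lemma ratCosets_add_rat (x : ℝ) (q : ℚ) : ratCosets (x + q) x :=
  QuotientAddGroup.leftRel_apply.2 ⟨-q, by simp⟩

lemma continuum_le_mk_quotient_ratCosets : 𝔠 ≤ #(Quotient ratCosets) := by
  by_contra! h
  have hQ : #(Rat.castHom ℝ).toAddMonoidHom.range ≤ ℵ₀ := by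
    rw [← SetLike.coe_sort_coe, AddMonoidHom.coe_range]
    exact mk_range_le.trans mk_le_aleph0
  have := mk_congr (AddSubgroup.addGroupEquivQuotientProdAddSubgroup
    (s := (Rat.castHom ℝ).toAddMonoidHom.range))
  rw [mk_real, mk_prod, lift_id, lift_id] at this
  exact (this.trans_lt (mul_lt_of_lt aleph0_le_continuum h
    (hQ.trans_lt aleph0_lt_continuum))).false

lemma Continuous.twoSidedApprox_ratCosets {k : ℝ → ℝ} (hk : Continuous k) :
    TwoSidedApprox ratCosets k := by
  intro x ε hε δ hδ
  obtain ⟨γ, hγ, hkγ⟩ := Metric.continuous_iff.1 hk x ε hε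
  have near (q : ℚ) (hq : |(q : ℝ)| < γ) : ratCosets (x + q) x ∧ |k (x + q) - k x| < ε :=
    ⟨ratCosets_add_rat x q, by simpa [Real.dist_eq] using hkγ (x + q) (by simpa [Real.dist_eq])⟩
  obtain ⟨q, hq, hq0⟩ := exists_rat_btwn (neg_lt_zero.2 (lt_min hγ hδ))
  obtain ⟨q', hq0', hq'⟩ := exists_rat_btwn (lt_min hγ hδ)
  have := min_le_left γ δ
  have := min_le_right γ δ
  refine ⟨⟨x + q, ⟨by linarith, by linarith⟩, near q ?_⟩,
    ⟨x + q', ⟨by linarith, by linarith⟩, near q' ?_⟩⟩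
  · rw [abs_lt]; constructor <;> linarith
  · rw [abs_lt]; constructor <;> linarith

lemma eq_of_sq_sub_mem_sup {s t : ℝ}
    (h : (fun x => (x - s) ^ 2) ∈ ℝ ∙ (fun x : ℝ => (x - t) ^ 2) ⊔ classFunctions ratCosets) :
    s = t := by
  obtain ⟨_, hc, _, ⟨φ, rfl⟩, hsum⟩ := Submodule.mem_sup.1 h
  obtain ⟨c, rfl⟩ := Submodule.mem_span_singleton.1 hc
  have hx (x : ℝ) : c * (x - t) ^ 2 + φ (Quotient.mk _ x) = (x - s) ^ 2 := congrFun hsum x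
  have hclass (q : ℚ) : Quotient.mk ratCosets q = Quotient.mk ratCosets 0 :=
    Quotient.sound (by simpa using ratCosets_add_rat 0 q)
  -- `0`, `1` and `-1` lie in one coset, where `(x - s) ^ 2 - c * (x - t) ^ 2` is therefore constant
  have e0 := hx 0
  have e1 := hx 1
  have e2 := hx (-1)
  rw [show Quotient.mk ratCosets 1 = Quotient.mk ratCosets 0 by exact_mod_cast hclass 1] at e1
  rw [show Quotient.mk ratCosets (-1) = Quotient.mk ratCosets 0 by exact_mod_cast hclass (-1)] at e2
  linear_combination (e1 - e2) / 4 + t * (e1 + e2 - 2 * e0) / 2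

/-- **Corollary.** The family `PC(ℝ)` of peripherally continuous functions has property
`B(2^𝔠, 𝔠)`: `PC(ℝ) ∪ {0}` is the union of at least `𝔠` many linear subspaces of `ℝ^ℝ`,
each contained in `PC(ℝ) ∪ {0}` and each of dimension at least `2^𝔠`. -/
theorem peripherallyContinuous_property_B :
    ∃ 𝓑 : Set (Submodule ℝ (ℝ → ℝ)),
      Cardinal.continuum ≤ #𝓑 ∧
      (∀ B ∈ 𝓑, (B : Set (ℝ → ℝ)) ⊆ {f | IsPeripherallyContinuous f} ∪ {0} ∧
        2 ^ Cardinal.continuum ≤ Module.rank ℝ B) ∧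
      {f | IsPeripherallyContinuous f} ∪ {0} = ⋃ B ∈ 𝓑, (B : Set (ℝ → ℝ)) := by
  set 𝓑 : Set (Submodule ℝ (ℝ → ℝ)) := {B | ∃ (r : Setoid ℝ) (k : ℝ → ℝ),
    𝔠 ≤ #(Quotient r) ∧ TwoSidedApprox r k ∧ B = ℝ ∙ k ⊔ classFunctions r}
  have hPC : ∀ B ∈ 𝓑, (B : Set (ℝ → ℝ)) ⊆ {f | IsPeripherallyContinuous f} := by
    rintro _ ⟨r, k, -, hk, rfl⟩ g hg
    exact (hk.of_mem_sup hg).isPeripherallyContinuous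
  have hsq (t : ℝ) : ℝ ∙ (fun x => (x - t) ^ 2) ⊔ classFunctions ratCosets ∈ 𝓑 :=
    ⟨ratCosets, _, continuum_le_mk_quotient_ratCosets,
      (continuous_id.sub continuous_const).pow 2 |>.twoSidedApprox_ratCosets, rfl⟩
  refine ⟨𝓑, ?_, fun B hB => ⟨(hPC B hB).trans subset_union_left, ?_⟩, ?_⟩
  · rw [← mk_real]
    refine mk_le_of_injective (f := fun t => ⟨_, hsq t⟩) fun s t hst => eq_of_sq_sub_mem_sup ?_
    have hst' : _ = _ := congrArg Subtype.val hst
    dsimp only at hst'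
    rw [← hst']
    exact Submodule.mem_sup_left (Submodule.mem_span_singleton_self _)
  · obtain ⟨r, k, hr, -, rfl⟩ := hB
    exact two_pow_continuum_le_rank_sup hr k
  · refine subset_antisymm ?_ (iUnion₂_subset fun B hB => (hPC B hB).trans subset_union_left)
    rintro g (hg | rfl)
    · obtain ⟨r, hr, hgr⟩ := hg.twoSidedApprox_top.exists_refinement
      exact mem_biUnion ⟨r, g, hr, hgr, rfl⟩
        (Submodule.mem_sup_left (Submodule.mem_span_singleton_self g))
    · exact mem_biUnion (hsq 0) (zero_mem _)
end

section
/- Every ℝ-linear subspace Y of ℝ^ℝ with Y ⊆ PC(ℝ) ∪ {0} and dim_ℝ Y < 2^𝔠 is contained in an ℝ-linear subspace X of ℝ^ℝ with X ⊆ PC(ℝ) ∪ {0} and dim_ℝ X = 2^𝔠; that is, the homogeneous lineability number of the family PC(ℝ) of peripherally continuous functions is (2^𝔠)⁺, the largest possible value. -/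
open Cardinal

noncomputable section PCAux

open Set Submodule

open scoped Classical

namespace PCAux

/-- The abstract coordinate space. -/
abbrev Coord : Type := (ℕ → ℝ) × (ℕ → (ℕ → Prop)) × (ℕ → ℚ)

/-- The basic family of functions on coordinates, indexed by subsets of `ℝ`. -/
def zeta (A : Set ℝ) (d : Coord) : ℝ :=
  if h : ∃ j, d.2.1 j = fun n => d.1 n ∈ A then (d.2.2 (Nat.find h) : ℝ) else 0

lemma zeta_eval (A : ℕ → Set ℝ) :
    ∃ s x, ∀ (q : ℕ → ℚ) (i : ℕ), (∀ j, A j = A i → q j = q i) →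
      zeta (A i) (s, x, q) = (q i : ℝ) := by
  have sep : ∀ i j : ℕ, A i ≠ A j → ∃ p : ℝ, ¬(p ∈ A i ↔ p ∈ A j) := by
    intro i j hne
    by_contra hc
    push_neg at hc
    exact hne (Set.ext fun p => hc p)
  let P : ℕ → ℕ → ℝ := fun i j => if h : A i ≠ A j then (sep i j h).choose else 0
  let s : ℕ → ℝ := fun n => P n.unpair.1 n.unpair.2
  let x : ℕ → ℕ → Prop := fun j => fun n => s n ∈ A j
  have key : ∀ i j : ℕ, x j = x i → A j = A i := by
    intro i j hx
    by_contra hne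
    have hP : P j i = (sep j i hne).choose := dif_pos hne
    have hs : s (Nat.pair j i) = (sep j i hne).choose := by
      simp only [s, Nat.unpair_pair, hP]
    have h1 : x j (Nat.pair j i) = x i (Nat.pair j i) := by rw [hx]
    have h2 : (s (Nat.pair j i) ∈ A j) = (s (Nat.pair j i) ∈ A i) := h1
    exact (sep j i hne).choose_spec (by rw [← hs]; exact iff_of_eq h2)
  refine ⟨s, x, fun q i hq => ?_⟩
  have hex : ∃ j, x j = fun n => s n ∈ A i := ⟨i, rfl⟩
  have : zeta (A i) (s, x, q) = (q (Nat.find hex) : ℝ) := dif_pos hex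
  rw [this]
  have hfind : x (Nat.find hex) = x i := Nat.find_spec hex
  rw [hq _ (key i _ hfind)]

/-- Key avoidance lemma: for a fixed scalar `a ≠ 0`, fixed "old part" `z₀` and fixed
target system `w` with tolerance `ε > 0`, only finitely many `A` can avoid the target. -/
lemma bad_finite (a : ℝ) (ha : a ≠ 0) (z₀ w : Coord → ℝ) {ε : ℝ} (hε : 0 < ε) :
    {A : Set ℝ | ∀ d : Coord, ε ≤ |a * zeta A d + z₀ d - w d|}.Finite := by
  by_contra hinf
  have hinf' : {A : Set ℝ | ∀ d : Coord, ε ≤ |a * zeta A d + z₀ d - w d|}.Infinite := hinf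
  obtain e := hinf'.natEmbedding
  set A : ℕ → Set ℝ := fun i => (e i : Set ℝ) with hA
  have hAinj : Function.Injective A := fun i j h => by
    have := Subtype.coe_injective h
    exact e.injective this
  obtain ⟨s, x, hx⟩ := zeta_eval A
  obtain ⟨eqv⟩ : Nonempty (ℕ ≃ ℚ) := ⟨(Denumerable.eqv ℚ).symm⟩
  set q : ℕ → ℚ := fun n => eqv n with hqdef
  set d : Coord := (s, x, q) with hd
  set T : ℝ := w d - z₀ d with hT
  have hεa : (0:ℝ) < ε / |a| := div_pos hε (abs_pos.mpr ha)
  obtain ⟨q₀, hq₀⟩ := exists_rat_near (T / a) hεa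
  have hclose : |a * (q₀:ℝ) - T| < ε := by
    have : a * (q₀:ℝ) - T = a * ((q₀:ℝ) - T / a) := by field_simp
    rw [this, abs_mul]
    calc |a| * |(q₀:ℝ) - T / a| < |a| * (ε / |a|) := by
          apply mul_lt_mul_of_pos_left _ (abs_pos.mpr ha)
          rwa [abs_sub_comm]
      _ = ε := by field_simp
  set i : ℕ := eqv.symm q₀ with hi
  have hqi : q i = q₀ := by simp [hqdef, hi]
  have hv : zeta (A i) d = (q i : ℝ) :=
    hx q i (fun j hj => by rw [hAinj hj])
  have hmem := (e i).2 d
  rw [show zeta ((e i : Set ℝ)) d = zeta (A i) d from rfl, hv, hqi] at hmem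
  have : a * (q₀:ℝ) + z₀ d - w d = a * (q₀:ℝ) - T := by rw [hT]; ring
  rw [this] at hmem
  exact absurd hclose (not_lt.mpr hmem)

/-- The family `zeta` is linearly independent. -/
lemma zeta_li : LinearIndependent ℝ zeta := by
  rw [linearIndependent_iff']
  intro F coef hsum A₀ hA₀
  set L := F.toList with hL
  set A : ℕ → Set ℝ := fun i => L.getD i A₀ with hA
  obtain ⟨s, x, hx⟩ := zeta_eval A
  set q : ℕ → ℚ := fun j => if A j = A₀ then 1 else 0 with hq
  set d : Coord := (s, x, q) with hd
  have hzeta : ∀ B ∈ F, zeta B d = if B = A₀ then 1 else 0 := by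
    intro B hB
    have hBL : B ∈ L := by rw [hL]; exact Finset.mem_toList.mpr hB
    obtain ⟨i, hi, hgot⟩ := List.getElem_of_mem hBL
    have hBA : B = A i := by simp [hA, List.getD, hgot.symm, hi]
    have hcompat : ∀ j, A j = A i → q j = q i := by
      intro j hj; simp [hq, hj]
    have := hx q i hcompat
    rw [hBA, this, hq]
    simp only [← hBA]
    split_ifs <;> norm_num
  have h0 := congrFun hsum d
  simp only [Finset.sum_apply, Pi.smul_apply, smul_eq_mul, Pi.zero_apply] at h0
  have : ∑ B ∈ F, coef B * zeta B d = coef A₀ := by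
    rw [Finset.sum_congr rfl (fun B hB => by rw [hzeta B hB])]
    rw [Finset.sum_eq_single A₀]
    · simp
    · intro B hB hne; simp [hne]
    · intro h; exact absurd hA₀ h
  rw [this] at h0
  exact h0


/-- The subgroup of rationals inside `ℝ`. -/
def Qsub : AddSubgroup ℝ where
  carrier := Set.range ((↑) : ℚ → ℝ)
  add_mem' := by rintro _ _ ⟨a, rfl⟩ ⟨b, rfl⟩; exact ⟨a + b, by push_cast; ring⟩
  zero_mem' := ⟨0, by norm_num⟩
  neg_mem' := by rintro _ ⟨a, rfl⟩; exact ⟨-a, by push_cast; ring⟩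

abbrev RQ : Type := ℝ ⧸ Qsub

lemma mk_Coord : #Coord = 𝔠 := by
  have h1 : #(ℕ → ℝ) = 𝔠 := by
    rw [mk_arrow]; simp [mk_real, Cardinal.mk_nat, continuum_power_aleph0]
  have h2 : #(ℕ → ℕ → Prop) = 𝔠 := by
    have hp : #(ℕ → Prop) = 𝔠 := by
      rw [mk_arrow]; simp [Cardinal.mk_Prop, Cardinal.mk_nat, two_power_aleph0]
    rw [mk_arrow]; simp [hp, Cardinal.mk_nat, continuum_power_aleph0]
  have h3 : #(ℕ → ℚ) = 𝔠 := by
    rw [mk_arrow]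
    simp only [Cardinal.mk_nat, mk_denumerable, Cardinal.lift_id, lift_aleph0]
    rw [power_self_eq le_rfl, two_power_aleph0]
  have : #Coord = #(ℕ → ℝ) * (#(ℕ → ℕ → Prop) * #(ℕ → ℚ)) := by
    simp [Cardinal.mk_prod]
  rw [this, h1, h2, h3, Cardinal.mul_eq_self aleph0_le_continuum,
    Cardinal.mul_eq_self aleph0_le_continuum]

lemma mk_RQ : #RQ = 𝔠 := by
  apply le_antisymm
  · calc #RQ ≤ #ℝ := mk_le_of_surjective QuotientAddGroup.mk_surjective
      _ = 𝔠 := mk_real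
  · have hsurj : Function.Surjective (fun p : RQ × ℚ => Quotient.out p.1 + (p.2 : ℝ)) := by
      intro t
      set c : RQ := QuotientAddGroup.mk t with hc
      have hout : (QuotientAddGroup.mk (Quotient.out c) : RQ) = c := QuotientAddGroup.out_eq' c
      have : -(Quotient.out c) + t ∈ Qsub := by
        rw [← QuotientAddGroup.eq, hout]
      obtain ⟨qq, hqq⟩ := this
      exact ⟨(c, qq), by show Quotient.out c + (qq:ℝ) = t; rw [hqq]; ring⟩
    have hle : (𝔠 : Cardinal) ≤ #(RQ × ℚ) := by
      rw [← mk_real]; exact mk_le_of_surjective hsurj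
    have : #(RQ × ℚ) = #RQ * ℵ₀ := by simp [Cardinal.mk_prod, mk_denumerable]
    rw [this] at hle
    rcases le_max_iff.mp (hle.trans (mul_le_max _ _)) with h | h
    · rcases le_max_iff.mp h with h' | h'
      · exact h'
      · exact absurd h' (not_le.mpr aleph0_lt_continuum)
    · exact absurd h (not_le.mpr aleph0_lt_continuum)

/-- A bijection between the rational quotient of `ℝ` and the coordinate space. -/
def EQC : RQ ≃ Coord := Classical.choice (Cardinal.eq.mp (mk_RQ.trans mk_Coord.symm))

/-- The projection of `ℝ` onto the coordinate space; all fibers are dense. -/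
def pi0 : ℝ → Coord := fun t => EQC (QuotientAddGroup.mk t)

lemma pi0_surj : Function.Surjective pi0 :=
  EQC.surjective.comp QuotientAddGroup.mk_surjective

lemma fiber_dense (d : Coord) {l r : ℝ} (hlr : l < r) :
    ∃ t : ℝ, t ∈ Set.Ioo l r ∧ pi0 t = d := by
  set c : RQ := EQC.symm d with hcdef
  set t₀ : ℝ := Quotient.out c with ht₀def
  obtain ⟨qq, hq1, hq2⟩ := exists_rat_btwn (sub_lt_sub_right hlr t₀)
  refine ⟨t₀ + qq, ⟨by linarith, by linarith⟩, ?_⟩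
  have hmem : -t₀ + (t₀ + (qq:ℝ)) ∈ Qsub := ⟨qq, by ring⟩
  have heq : (QuotientAddGroup.mk (t₀ + (qq:ℝ)) : RQ) = QuotientAddGroup.mk t₀ :=
    (QuotientAddGroup.eq.mpr hmem).symm
  have hout : (QuotientAddGroup.mk t₀ : RQ) = c := QuotientAddGroup.out_eq' c
  simp only [pi0, heq, hout, hcdef, Equiv.apply_symm_apply]

/-- The big linearly independent family of functions `ℝ → ℝ`. -/
def gfun (A : Set ℝ) : ℝ → ℝ := fun t => zeta A (pi0 t)

lemma gfun_eq : gfun = (LinearMap.funLeft ℝ ℝ pi0) ∘ zeta := rfl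

lemma gfun_li : LinearIndependent ℝ gfun := by
  rw [gfun_eq]
  exact zeta_li.map' (LinearMap.funLeft ℝ ℝ pi0)
    (LinearMap.ker_eq_bot.mpr (LinearMap.funLeft_injective_of_surjective ℝ ℝ pi0 pi0_surj))

/-- Sufficient condition for peripheral continuity: a dense graph. -/
def DenseGr (h : ℝ → ℝ) : Prop :=
  ∀ l r c ε : ℝ, l < r → 0 < ε → ∃ t, t ∈ Set.Ioo l r ∧ |h t - c| < ε

lemma DenseGr.pc {h : ℝ → ℝ} (hd : DenseGr h) : IsPeripherallyContinuous h := by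
  intro x U V hU hV hxU hxV
  obtain ⟨δ, hδ, hδU⟩ := Metric.isOpen_iff.mp hU x hxU
  obtain ⟨ε, hε, hεV⟩ := Metric.isOpen_iff.mp hV (h x) hxV
  obtain ⟨t₁, ht₁, hv₁⟩ := hd (x - δ) x (h x) ε (by linarith) hε
  obtain ⟨t₂, ht₂, hv₂⟩ := hd x (x + δ) (h x) ε (by linarith) hε
  refine ⟨Set.Ioo t₁ t₂, isOpen_Ioo, ⟨ht₁.2, ht₂.1⟩, ?_, ?_⟩
  · intro p hp
    apply hδU
    rw [Metric.mem_ball, Real.dist_eq, abs_lt]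
    obtain ⟨h1, h2⟩ := hp
    obtain ⟨h3, h4⟩ := ht₁
    obtain ⟨h5, h6⟩ := ht₂
    constructor <;> linarith
  · rw [frontier_Ioo (ht₁.2.trans ht₂.1)]
    rintro _ ⟨p, hp, rfl⟩
    rcases hp with rfl | rfl
    · exact hεV (by rw [Metric.mem_ball, Real.dist_eq]; exact hv₁)
    · exact hεV (by rw [Metric.mem_ball, Real.dist_eq]; exact hv₂)

/-- Cardinality bound for a real vector space in terms of its rank. -/
lemma card_module_le (V : Type) [AddCommGroup V] [Module ℝ V] :
    #V ≤ max (Module.rank ℝ V) 𝔠 := by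
  let b := Module.Basis.ofVectorSpace ℝ V
  have hcard : #V = #(Module.Basis.ofVectorSpaceIndex ℝ V →₀ ℝ) := b.repr.toEquiv.cardinal_eq
  by_cases hne : Nonempty (Module.Basis.ofVectorSpaceIndex ℝ V)
  · rw [hcard, mk_finsupp_of_infinite' _ _, b.mk_eq_rank'', mk_real]
  · haveI : IsEmpty (Module.Basis.ofVectorSpaceIndex ℝ V) := not_nonempty_iff.mp hne
    haveI : Fintype (Module.Basis.ofVectorSpaceIndex ℝ V) := Fintype.ofIsEmpty
    have : #(Module.Basis.ofVectorSpaceIndex ℝ V →₀ ℝ) = 1 := by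
      rw [mk_finsupp_lift_of_fintype]
      simp
    rw [hcard, this]
    exact le_trans (one_le_aleph0.trans aleph0_le_continuum) (le_max_right _ _)


section Main

variable (Yset : Set (ℝ → ℝ))

/-- Goodness of a family of index sets: every nonzero element in the span of the
corresponding functions, translated by any member of `Yset`, has a dense graph. -/
def GoodF (I : Set (Set ℝ)) : Prop :=
  ∀ z ∈ Submodule.span ℝ (gfun '' I), z ≠ 0 → ∀ y ∈ Yset, DenseGr (y + z)

lemma goodF_empty : GoodF Yset ∅ := by
  intro z hz hz0
  exact absurd (by simpa [Submodule.mem_bot] using hz) hz0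

lemma goodF_sUnion {c : Set (Set (Set ℝ))} (hchain : IsChain (· ⊆ ·) c)
    (hne : c.Nonempty) (hgood : ∀ I ∈ c, GoodF Yset I) : GoodF Yset (⋃₀ c) := by
  intro z hz hz0 y hy
  rw [Set.sUnion_eq_biUnion, Set.image_iUnion₂] at hz
  obtain ⟨T, hTsub, hzT⟩ := Submodule.mem_span_finite_of_mem_span hz
  have hdir : DirectedOn (fun K J : Set (Set ℝ) => gfun '' K ⊆ gfun '' J) c := by
    intro K hK J hJ
    rcases hchain.total hK hJ with h | h
    · exact ⟨J, hJ, Set.image_mono h, le_refl _⟩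
    · exact ⟨K, hK, le_refl _, Set.image_mono h⟩
  obtain ⟨J, hJc, hTJ⟩ := hdir.exists_mem_subset_of_finset_subset_biUnion hne hTsub
  exact hgood J hJc z (Submodule.span_mono hTJ hzT) hz0 y hy

/-- A fixed point in a given fiber of `pi0`, inside a given rational interval. -/
def pt (l r : ℚ) (d : Coord) : ℝ :=
  if h : (l : ℝ) < (r : ℝ) then (fiber_dense d h).choose else 0

lemma pt_spec {l r : ℚ} (h : (l : ℝ) < (r : ℝ)) (d : Coord) :
    pt l r d ∈ Set.Ioo (l : ℝ) (r : ℝ) ∧ pi0 (pt l r d) = d := by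
  rw [pt, dif_pos h]
  exact (fiber_dense d h).choose_spec

/-- The collection of "bad" sets for a given requirement. -/
def BadSet (yy : ℝ → ℝ) (l r cc εε : ℚ) (zc : Coord → ℝ) (a : ℝ) : Set (Set ℝ) :=
  {A | ∀ d : Coord, (εε : ℝ) ≤ |a * zeta A d + zc d - ((cc : ℝ) - yy (pt l r d))|}

lemma badSet_countable (yy : ℝ → ℝ) (l r cc εε : ℚ) (zc : Coord → ℝ) (a : ℝ)
    (ha : a ≠ 0) (hε : (0 : ℝ) < (εε : ℝ)) : #(BadSet yy l r cc εε zc a) ≤ ℵ₀ := by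
  have hfin : (BadSet yy l r cc εε zc a).Finite :=
    bad_finite a ha zc (fun d => (cc : ℝ) - yy (pt l r d)) hε
  haveI := hfin.countable.to_subtype
  exact mk_le_aleph0


lemma mk_idx_lt {α β : Type} (ha : #α < 2 ^ 𝔠) (hb : #β < 2 ^ 𝔠) :
    #(α × ℚ × ℚ × ℚ × ℚ × β × ℝ) < 2 ^ 𝔠 := by
  have hcc : 𝔠 < 2 ^ 𝔠 := cantor 𝔠
  have h2c : ℵ₀ ≤ 2 ^ 𝔠 := aleph0_le_continuum.trans hcc.le
  have h2c' : ℵ₀ < 2 ^ 𝔠 := aleph0_le_continuum.trans_lt hcc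
  have hq : #ℚ < 2 ^ 𝔠 := by rw [mk_denumerable]; exact h2c'
  have hr : #ℝ < 2 ^ 𝔠 := by rw [mk_real]; exact hcc
  have e1 : #(β × ℝ) < 2 ^ 𝔠 := by
    rw [Cardinal.mk_prod, Cardinal.lift_id, Cardinal.lift_id]; exact mul_lt_of_lt h2c hb hr
  have e2 : #(ℚ × β × ℝ) < 2 ^ 𝔠 := by
    rw [Cardinal.mk_prod, Cardinal.lift_id, Cardinal.lift_id]; exact mul_lt_of_lt h2c hq e1
  have e3 : #(ℚ × ℚ × β × ℝ) < 2 ^ 𝔠 := by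
    rw [Cardinal.mk_prod, Cardinal.lift_id, Cardinal.lift_id]; exact mul_lt_of_lt h2c hq e2
  have e4 : #(ℚ × ℚ × ℚ × β × ℝ) < 2 ^ 𝔠 := by
    rw [Cardinal.mk_prod, Cardinal.lift_id, Cardinal.lift_id]; exact mul_lt_of_lt h2c hq e3
  have e5 : #(ℚ × ℚ × ℚ × ℚ × β × ℝ) < 2 ^ 𝔠 := by
    rw [Cardinal.mk_prod, Cardinal.lift_id, Cardinal.lift_id]; exact mul_lt_of_lt h2c hq e4
  rw [Cardinal.mk_prod, Cardinal.lift_id, Cardinal.lift_id]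
  exact mul_lt_of_lt h2c ha e5

lemma extend_good (hYc : #Yset < 2 ^ 𝔠) (I : Set (Set ℝ))
    (hI : GoodF Yset I) (hIc : #I < 2 ^ 𝔠) :
    ∃ A : Set ℝ, A ∉ I ∧ GoodF Yset (insert A I) := by
  classical
  have hcc : 𝔠 < 2 ^ 𝔠 := cantor 𝔠
  have h2c : ℵ₀ ≤ 2 ^ 𝔠 := aleph0_le_continuum.trans hcc.le
  have h2c' : ℵ₀ < 2 ^ 𝔠 := aleph0_le_continuum.trans_lt hcc
  set S0 : Submodule ℝ (Coord → ℝ) := Submodule.span ℝ (zeta '' I) with hS0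
  have hS0c : #S0 < 2 ^ 𝔠 := by
    have h1 : Module.rank ℝ S0 ≤ #I := le_trans (rank_span_le _) mk_image_le
    exact lt_of_le_of_lt (card_module_le S0) (max_lt (lt_of_le_of_lt h1 hIc) hcc)
  let Idx : Type := Yset × ℚ × ℚ × ℚ × ℚ × S0 × ℝ
  let Bp : Idx → Set (Set ℝ) := fun p =>
    if (0 : ℝ) < ((p.2.2.2.2.1 : ℚ) : ℝ) ∧ p.2.2.2.2.2.2 ≠ 0 then
      BadSet ((p.1 : ℝ → ℝ)) p.2.1 p.2.2.1 p.2.2.2.1 p.2.2.2.2.1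
        ((p.2.2.2.2.2.1 : Coord → ℝ)) p.2.2.2.2.2.2
    else ∅
  have hBp : ∀ p : Idx, #(Bp p) ≤ ℵ₀ := by
    intro p
    by_cases h : (0 : ℝ) < ((p.2.2.2.2.1 : ℚ) : ℝ) ∧ p.2.2.2.2.2.2 ≠ 0
    · rw [show Bp p = BadSet ((p.1 : ℝ → ℝ)) p.2.1 p.2.2.1 p.2.2.2.1 p.2.2.2.2.1
        ((p.2.2.2.2.2.1 : Coord → ℝ)) p.2.2.2.2.2.2 from if_pos h]
      exact badSet_countable _ _ _ _ _ _ _ h.2 h.1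
    · rw [show Bp p = ∅ from if_neg h]
      simp
  have hIdx : #Idx < 2 ^ 𝔠 := mk_idx_lt hYc hS0c
  set Bad : Set (Set ℝ) := I ∪ ⋃ p : Idx, Bp p with hBad
  have hBadc : #Bad < 2 ^ 𝔠 := by
    have h1 : #(⋃ p : Idx, Bp p) ≤ #Idx * ℵ₀ := by
      calc #(⋃ p : Idx, Bp p) ≤ Cardinal.sum (fun p : Idx => #(Bp p)) :=
            mk_iUnion_le_sum_mk
        _ ≤ Cardinal.sum (fun _ : Idx => ℵ₀) := Cardinal.sum_le_sum _ _ hBp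
        _ = #Idx * ℵ₀ := Cardinal.sum_const' _ _
    calc #Bad ≤ #I + #(⋃ p : Idx, Bp p) := mk_union_le _ _
      _ ≤ #I + #Idx * ℵ₀ := by exact add_le_add le_rfl h1
      _ < 2 ^ 𝔠 := add_lt_of_lt h2c hIc (mul_lt_of_lt h2c hIdx h2c')
  have hex : ∃ A : Set ℝ, A ∉ Bad := by
    by_contra hcon
    push_neg at hcon
    have hsub : (Set.univ : Set (Set ℝ)) ⊆ Bad := fun A _ => hcon A
    have hle := mk_le_mk_of_subset hsub
    rw [mk_univ, mk_set, mk_real] at hle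
    exact absurd (lt_of_le_of_lt hle hBadc) (lt_irrefl _)
  obtain ⟨A, hA⟩ := hex
  have hAI : A ∉ I := fun h => hA (Or.inl h)
  refine ⟨A, hAI, ?_⟩
  intro z hz hz0 y hy
  rw [Set.image_insert_eq, Submodule.mem_span_insert] at hz
  obtain ⟨a, z₀, hz₀, rfl⟩ := hz
  by_cases ha : a = 0
  · subst ha
    rw [zero_smul, zero_add]
    rw [zero_smul, zero_add] at hz0
    exact hI z₀ hz₀ hz0 y hy
  · intro l r c ε hlr hε
    obtain ⟨l', hl'1, hl'2⟩ := exists_rat_btwn hlr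
    obtain ⟨r', hr'1, hr'2⟩ := exists_rat_btwn hl'2
    obtain ⟨ε', hε'1, hε'2⟩ := exists_rat_btwn (half_pos hε)
    obtain ⟨c', hc'⟩ := exists_rat_near c (half_pos hε)
    have hz₀' : z₀ ∈ Submodule.map (LinearMap.funLeft ℝ ℝ pi0) S0 := by
      rw [hS0, ← Submodule.span_image, ← Set.image_comp, ← gfun_eq]
      exact hz₀
    obtain ⟨zc, hzc, hzceq⟩ := hz₀'
    have hAB : A ∉ Bp ⟨⟨y, hy⟩, l', r', c', ε', ⟨zc, hzc⟩, a⟩ := by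
      intro h
      exact hA (Or.inr (Set.mem_iUnion.mpr ⟨_, h⟩))
    rw [show Bp ⟨⟨y, hy⟩, l', r', c', ε', ⟨zc, hzc⟩, a⟩ =
        BadSet y l' r' c' ε' zc a from if_pos ⟨hε'1, ha⟩] at hAB
    rw [BadSet, Set.mem_setOf_eq] at hAB
    push_neg at hAB
    obtain ⟨d, hd⟩ := hAB
    have hlr' : (l' : ℝ) < (r' : ℝ) := hr'1
    obtain ⟨htmem, htfib⟩ := pt_spec hlr' d
    set t : ℝ := pt l' r' d with ht
    refine ⟨t, ⟨lt_trans hl'1 htmem.1, lt_trans htmem.2 hr'2⟩, ?_⟩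
    have hzt : (a • gfun A + z₀) t = a * zeta A d + zc d := by
      rw [← hzceq]
      simp only [Pi.add_apply, Pi.smul_apply, smul_eq_mul, gfun,
        LinearMap.funLeft_apply, htfib]
    have hyz : (y + (a • gfun A + z₀)) t - c =
        (a * zeta A d + zc d - ((c' : ℝ) - y t)) + ((c' : ℝ) - c) := by
      rw [Pi.add_apply, hzt]; ring
    rw [hyz]
    calc |(a * zeta A d + zc d - ((c' : ℝ) - y t)) + ((c' : ℝ) - c)|
        ≤ |a * zeta A d + zc d - ((c' : ℝ) - y t)| + |(c' : ℝ) - c| := abs_add_le _ _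
      _ < (ε' : ℝ) + ε / 2 := by
          apply add_lt_add hd
          rw [abs_sub_comm]; exact hc'
      _ ≤ ε := by linarith

end Main

end PCAux

end PCAux

/-- **Theorem.** Every linear subspace of `ℝ^ℝ` contained in `PC(ℝ) ∪ {0}` of dimension
less than `2^𝔠` extends to a linear subspace contained in `PC(ℝ) ∪ {0}` of dimension
exactly `2^𝔠`; i.e. the homogeneous lineability number of `PC(ℝ)` is `(2^𝔠)⁺`. -/
theorem peripherallyContinuous_homLineable :
    ∀ Y : Submodule ℝ (ℝ → ℝ),
      (Y : Set (ℝ → ℝ)) ⊆ {f | IsPeripherallyContinuous f} ∪ {0} →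
      Module.rank ℝ Y < 2 ^ Cardinal.continuum →
      ∃ X : Submodule ℝ (ℝ → ℝ), Y ≤ X ∧
        (X : Set (ℝ → ℝ)) ⊆ {f | IsPeripherallyContinuous f} ∪ {0} ∧
        Module.rank ℝ X = 2 ^ Cardinal.continuum := by
  classical
  intro Y hY hrank
  have hcc : 𝔠 < 2 ^ 𝔠 := Cardinal.cantor 𝔠
  have hYcard : #(Y : Set (ℝ → ℝ)) < 2 ^ 𝔠 := by
    have h := PCAux.card_module_le ↥Y
    exact lt_of_le_of_lt h (max_lt hrank hcc)
  -- Zorn's lemma: a maximal good family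
  obtain ⟨M, -, hmax⟩ := zorn_subset_nonempty {I : Set (Set ℝ) | PCAux.GoodF (Y : Set (ℝ → ℝ)) I}
    (fun c hcS hchain hcne =>
      ⟨⋃₀ c, PCAux.goodF_sUnion (Y : Set (ℝ → ℝ)) hchain hcne (fun I hI => hcS hI),
        fun s hs => Set.subset_sUnion_of_mem hs⟩)
    ∅ (PCAux.goodF_empty (Y : Set (ℝ → ℝ)))
  have hMgood : PCAux.GoodF (Y : Set (ℝ → ℝ)) M := hmax.prop
  -- the maximal family has full cardinality
  have hMlarge : ¬ (#M < 2 ^ 𝔠) := by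
    intro hlt
    obtain ⟨A, hAM, hgood⟩ := PCAux.extend_good (Y : Set (ℝ → ℝ)) hYcard M hMgood hlt
    have hsub : insert A M ⊆ M := hmax.2 hgood (Set.subset_insert A M)
    exact hAM (hsub (Set.mem_insert A M))
  have hMcard : #M = 2 ^ 𝔠 := by
    refine le_antisymm ?_ (not_lt.mp hMlarge)
    calc #M ≤ #(Set ℝ) := mk_set_le M
      _ = 2 ^ 𝔠 := by rw [mk_set, Cardinal.mk_real]
  set Z : Submodule ℝ (ℝ → ℝ) := Submodule.span ℝ (PCAux.gfun '' M) with hZ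
  refine ⟨Y ⊔ Z, le_sup_left, ?_, ?_⟩
  · -- containment in PC ∪ {0}
    intro w hw
    rw [SetLike.mem_coe, Submodule.mem_sup] at hw
    obtain ⟨y, hy, z, hz, rfl⟩ := hw
    by_cases hz0 : z = 0
    · subst hz0
      rw [add_zero]
      exact hY hy
    · left
      exact (hMgood z hz hz0 y hy).pc
  · -- rank computation
    apply le_antisymm
    · calc Module.rank ℝ ↥(Y ⊔ Z) ≤ Module.rank ℝ (ℝ → ℝ) := Submodule.rank_le _
        _ ≤ #(ℝ → ℝ) := rank_le_card _ _
        _ = 2 ^ 𝔠 := by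
            rw [Cardinal.mk_arrow, Cardinal.mk_real]
            simp only [Cardinal.lift_id]
            exact Cardinal.power_self_eq Cardinal.aleph0_le_continuum
    · have hli : LinearIndependent ℝ (fun A : ↥M => PCAux.gfun ↑A) :=
        PCAux.gfun_li.comp _ Subtype.val_injective
      have hinj : Function.Injective (fun A : ↥M => PCAux.gfun ↑A) :=
        PCAux.gfun_li.injective.comp Subtype.val_injective
      have himg : PCAux.gfun '' M = Set.range (fun A : ↥M => PCAux.gfun ↑A) :=
        (Set.image_eq_range _ _)
      have hrankZ : Module.rank ℝ ↥Z = #M := by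
        rw [hZ, himg, rank_span hli, Cardinal.mk_range_eq _ hinj]
      calc (2 : Cardinal) ^ 𝔠 = #M := hMcard.symm
        _ = Module.rank ℝ ↥Z := hrankZ.symm
        _ ≤ Module.rank ℝ ↥(Y ⊔ Z) := Submodule.rank_mono le_sup_right
end
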